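/- arXiv:1110.6618 — 9 statements merged into one kernel-verified Lean document; each statement's English description precedes it below -/
import Mathlib

section
/- Let P = ⟨c, h | c^{p^n} = h^{p^m} = 1, h c h^{-1} = c^j⟩ with p an odd prime, n ≥ 2, j ≡ 1 (mod p), j^{p^{m-1}} ≡ 1 (mod p^n), and let α be an integer with 1 ≤ α ≤ p − 1. Then the element c^α h has order p^m in P if and only if m ≥ n. -/
/-- `(1+x)^i ≡ 1 + i*x  mod x^2`. -/
lemma aux_binom (x : ℤ) : ∀ i : ℕ, x ^ 2 ∣ (1 + x) ^ i - (1 + i * x)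
  | 0 => by simp
  | (i + 1) => by
    have ih := aux_binom x i
    have : (1 + x) ^ (i + 1) - (1 + (i + 1 : ℕ) * x)
        = ((1 + x) ^ i - (1 + i * x)) * (1 + x) + i * x ^ 2 := by
      push_cast; ring
    rw [this]
    exact dvd_add (Dvd.dvd.mul_right ih _) (Dvd.dvd.mul_left (dvd_refl _) _)

/-- If `b ≡ 1 [ZMOD p]` with `p` an odd prime, then `∑_{i<p} b^i = p * (1 + p * w)`. -/
lemma aux_geom_sum (p : ℕ) (hp : p.Prime) (hodd : Odd p) (b : ℤ)
    (hb : (p : ℤ) ∣ b - 1) : ∃ w : ℤ, (∑ i ∈ Finset.range p, b ^ i) = p * (1 + p * w) := by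
  obtain ⟨t, ht⟩ := hb
  have hb' : b = 1 + p * t := by linarith
  have hterm : ∀ i : ℕ, (p : ℤ) ^ 2 ∣ b ^ i - (1 + i * (p * t)) := by
    intro i
    have h1 := aux_binom ((p : ℤ) * t) i
    rw [← hb'] at h1
    exact dvd_trans ⟨t ^ 2, by ring⟩ h1
  have hsum : (p : ℤ) ^ 2 ∣ (∑ i ∈ Finset.range p, b ^ i)
      - (∑ i ∈ Finset.range p, (1 + (i : ℤ) * (p * t))) := by
    rw [← Finset.sum_sub_distrib]
    exact Finset.dvd_sum fun i _ => hterm i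
  -- Gauss sum
  obtain ⟨k, hk⟩ := hodd
  have hpk : p - 1 = 2 * k := by omega
  have hq : (p - 1) / 2 = k := by omega
  have h2 : (∑ i ∈ Finset.range p, i) * 2 = p * k * 2 := by
    rw [Finset.sum_range_id_mul_two p, hpk]; ring
  have h3 : (∑ i ∈ Finset.range p, i) = p * k :=
    Nat.eq_of_mul_eq_mul_right two_pos h2
  have hgauss : (∑ i ∈ Finset.range p, (i : ℤ)) = (p : ℤ) * k := by
    have : ((∑ i ∈ Finset.range p, i : ℕ) : ℤ) = ((p * k : ℕ) : ℤ) := by rw [h3]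
    push_cast at this
    exact this
  have hmodel : (∑ i ∈ Finset.range p, (1 + (i : ℤ) * (p * t)))
      = p + p ^ 2 * (t * k) := by
    rw [Finset.sum_add_distrib]
    simp only [Finset.sum_const, Finset.card_range, nsmul_eq_mul, mul_one]
    rw [← Finset.sum_mul, hgauss]; ring
  obtain ⟨w, hw⟩ := hsum
  refine ⟨t * k + w, ?_⟩
  have : (∑ i ∈ Finset.range p, b ^ i)
      = (∑ i ∈ Finset.range p, (1 + (i : ℤ) * (p * t))) + p ^ 2 * w := by linarith
  rw [this, hmodel]; ring

/-- Geometric sum factorization. -/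
lemma aux_geom_split (x : ℤ) (a : ℕ) : ∀ b : ℕ,
    (∑ i ∈ Finset.range (a * b), x ^ i)
      = (∑ i ∈ Finset.range a, x ^ i) * (∑ k ∈ Finset.range b, (x ^ a) ^ k)
  | 0 => by simp
  | (b + 1) => by
    rw [Nat.mul_succ, Finset.sum_range_add, aux_geom_split x a b,
      Finset.sum_range_succ _ b, mul_add]
    congr 1
    rw [Finset.sum_mul]
    refine Finset.sum_congr rfl fun i _ => ?_
    rw [pow_add, pow_mul]
    ring

/-- The key arithmetic fact: `∑_{i < p^m} j^i = p^m * (1 + p*z)` for some `z`. -/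
lemma aux_key (p j : ℕ) (hp : p.Prime) (hodd : Odd p) (hj : (p : ℤ) ∣ (j : ℤ) - 1) :
    ∀ m : ℕ, ∃ z : ℤ, (∑ i ∈ Finset.range (p ^ m), (j : ℤ) ^ i) = p ^ m * (1 + p * z)
  | 0 => ⟨0, by simp⟩
  | (m + 1) => by
    obtain ⟨z, hz⟩ := aux_key p j hp hodd hj m
    have hb : (p : ℤ) ∣ (j : ℤ) ^ p ^ m - 1 := by
      have h1 : (j : ℤ) ^ p ^ m - 1
          = ((j : ℤ) - 1) * (∑ i ∈ Finset.range (p ^ m), (j : ℤ) ^ i) := by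
        rw [mul_comm, geom_sum_mul]
      rw [h1]
      exact Dvd.dvd.mul_right hj _
    obtain ⟨w, hw⟩ := aux_geom_sum p hp hodd ((j : ℤ) ^ p ^ m) hb
    refine ⟨z + w + p * z * w, ?_⟩
    have hsplit := aux_geom_split (j : ℤ) (p ^ m) p
    rw [← pow_succ] at hsplit
    rw [hsplit, hz, hw, pow_succ]
    push_cast
    ring

/-- Divisibility criterion: `p^n ∣ ∑_{i<p^m} j^i ↔ n ≤ m`. -/
lemma aux_dvd_iff (p n m j : ℕ) (hp : p.Prime) (hodd : Odd p)
    (hj : (p : ℤ) ∣ (j : ℤ) - 1) :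
    p ^ n ∣ (∑ i ∈ Finset.range (p ^ m), j ^ i) ↔ n ≤ m := by
  obtain ⟨z, hz⟩ := aux_key p j hp hodd hj m
  have hcast : ((∑ i ∈ Finset.range (p ^ m), j ^ i : ℕ) : ℤ)
      = (p : ℤ) ^ m * (1 + p * z) := by push_cast at hz ⊢; exact hz
  constructor
  · intro hdvd
    by_contra hlt
    push_neg at hlt
    have h1 : (p : ℤ) ^ (m + 1) ∣ ((∑ i ∈ Finset.range (p ^ m), j ^ i : ℕ) : ℤ) := by
      have h0 : (p : ℤ) ^ (m + 1) ∣ (p : ℤ) ^ n := pow_dvd_pow _ (by omega)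
      exact h0.trans (by exact_mod_cast hdvd)
    rw [hcast, pow_succ] at h1
    have hp0 : (0 : ℤ) < p := by exact_mod_cast hp.pos
    have hpm : (p : ℤ) ^ m ≠ 0 := by positivity
    have h2 : (p : ℤ) ∣ 1 + p * z := (mul_dvd_mul_iff_left hpm).mp h1
    have h3 : (p : ℤ) ∣ 1 := (Int.dvd_add_right ⟨z, rfl⟩).mp (by rwa [add_comm] at h2)
    have h4 := Int.le_of_dvd one_pos h3
    have h5 := hp.two_le
    have : (2 : ℤ) ≤ p := by exact_mod_cast h5
    omega
  · intro hnm
    rw [← Int.natCast_dvd_natCast, hcast]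
    push_cast
    exact Dvd.dvd.mul_right (pow_dvd_pow _ hnm) _

/-- In `P = ⟨c,h | c^(p^n) = h^(p^m) = 1, h c h⁻¹ = c^j⟩` with `p` odd,
`n ≥ 2`, `j ≡ 1 (mod p)`, `j^(p^(m-1)) ≡ 1 (mod p^n)`, and `1 ≤ α ≤ p - 1`, the
element `c^α h` has order `p^m` if and only if `m ≥ n`. -/
theorem stmt_3 (p n m j : ℕ) (hp : p.Prime) (hodd : Odd p) (hn : 2 ≤ n)
    (hj1 : j % p = 1) (hjord : j ^ p ^ (m - 1) ≡ 1 [MOD p ^ n])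
    (P : Type*) [Group P] (c h : P)
    (hc : orderOf c = p ^ n) (hh : orderOf h = p ^ m)
    (hrel : h * c * h⁻¹ = c ^ j)
    (hgen : Subgroup.closure {c, h} = (⊤ : Subgroup P))
    (hcard : Nat.card P = p ^ (n + m))
    (α : ℕ) (hα1 : 1 ≤ α) (hα2 : α ≤ p - 1) :
    orderOf (c ^ α * h) = p ^ m ↔ n ≤ m := by
  have hp2 := hp.two_le
  have hpn1 : 1 < p ^ n := Nat.one_lt_pow (by omega) (by omega)
  -- conjugation of zpow
  have conjz : ∀ (g x : P) (k : ℤ), g * x ^ k * g⁻¹ = (g * x * g⁻¹) ^ k := by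
    intro g x k
    simpa [MulAut.conj_apply] using (map_zpow (MulAut.conj g) x k)
  -- basic conjugation facts
  have hconj : ∀ k : ℕ, h ^ k * c * (h ^ k)⁻¹ = c ^ (j ^ k) := by
    intro k
    induction k with
    | zero => simp
    | succ k ih =>
      rw [pow_succ, mul_inv_rev]
      calc h ^ k * h * c * (h⁻¹ * (h ^ k)⁻¹)
          = h ^ k * (h * c * h⁻¹) * (h ^ k)⁻¹ := by group
        _ = h ^ k * c ^ j * (h ^ k)⁻¹ := by rw [hrel]
        _ = (h ^ k * c * (h ^ k)⁻¹) ^ j := by rw [conj_pow]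
        _ = c ^ (j ^ (k + 1)) := by rw [ih, ← pow_mul, ← pow_succ]
  have hconj' : ∀ k a : ℕ, h ^ k * c ^ a = c ^ (a * j ^ k) * h ^ k := by
    intro k a
    have h1 : h ^ k * c ^ a * (h ^ k)⁻¹ = c ^ (a * j ^ k) := by
      rw [← conj_pow, hconj, ← pow_mul, mul_comm (j ^ k) a]
    calc h ^ k * c ^ a = h ^ k * c ^ a * (h ^ k)⁻¹ * h ^ k := by group
      _ = c ^ (a * j ^ k) * h ^ k := by rw [h1]
  -- the power formula
  have hformula : ∀ k : ℕ,
      (c ^ α * h) ^ k = c ^ (α * ∑ i ∈ Finset.range k, j ^ i) * h ^ k := by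
    intro k
    induction k with
    | zero => simp
    | succ k ih =>
      rw [pow_succ, ih]
      calc c ^ (α * ∑ i ∈ Finset.range k, j ^ i) * h ^ k * (c ^ α * h)
          = c ^ (α * ∑ i ∈ Finset.range k, j ^ i) * (h ^ k * c ^ α) * h := by group
        _ = c ^ (α * ∑ i ∈ Finset.range k, j ^ i) * (c ^ (α * j ^ k) * h ^ k) * h := by
            rw [hconj']
        _ = c ^ (α * ∑ i ∈ Finset.range k, j ^ i + α * j ^ k) * h ^ (k + 1) := by
            rw [pow_add, pow_succ]; group
        _ = c ^ (α * ∑ i ∈ Finset.range (k + 1), j ^ i) * h ^ (k + 1) := by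
            rw [Finset.sum_range_succ, Nat.mul_add]
  -- j is coprime to p
  have hcop : Nat.Coprime p j := by
    have h0 : Nat.gcd p j = Nat.gcd (j % p) p := Nat.gcd_rec p j
    rw [hj1, Nat.gcd_one_left] at h0
    exact h0
  have hcopn : Nat.Coprime j (p ^ n) := (hcop.symm).pow_right n
  -- inverse of j mod p^n
  obtain ⟨j', -, hj'⟩ := Nat.exists_mul_mod_eq_one_of_coprime hcopn hpn1
  -- h⁻¹ * c * h = c ^ j'
  have hinv : h⁻¹ * c * h = c ^ j' := by
    have h1 : h * c ^ j' * h⁻¹ = c ^ (j * j') := by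
      rw [← conj_pow, hrel, ← pow_mul]
    have h2 : c ^ (j * j') = c ^ 1 := by
      rw [pow_eq_pow_iff_modEq, hc]
      show j * j' % (p ^ n) = 1 % (p ^ n)
      rw [hj', Nat.one_mod_eq_one.mpr (by omega)]
    have h3 : h * c ^ j' * h⁻¹ = c := by rw [h1, h2, pow_one]
    calc h⁻¹ * c * h = h⁻¹ * (h * c ^ j' * h⁻¹) * h := by rw [h3]
      _ = c ^ j' := by group
  -- the subgroup of elements conjugating c into ⟨c⟩ from both sides
  let K : Subgroup P :=
    { carrier := {g | g * c * g⁻¹ ∈ Subgroup.zpowers c ∧ g⁻¹ * c * g ∈ Subgroup.zpowers c}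
      one_mem' := ⟨by simpa using Subgroup.mem_zpowers c,
        by simpa using Subgroup.mem_zpowers c⟩
      mul_mem' := by
        rintro a b ⟨ha1, ha2⟩ ⟨hb1, hb2⟩
        obtain ⟨s, hs⟩ := Subgroup.mem_zpowers_iff.mp ha1
        obtain ⟨s', hs'⟩ := Subgroup.mem_zpowers_iff.mp ha2
        obtain ⟨t, ht⟩ := Subgroup.mem_zpowers_iff.mp hb1
        obtain ⟨t', ht'⟩ := Subgroup.mem_zpowers_iff.mp hb2
        constructor
        · refine Subgroup.mem_zpowers_iff.mpr ⟨s * t, ?_⟩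
          calc c ^ (s * t) = (c ^ s) ^ t := by rw [zpow_mul]
            _ = (a * c * a⁻¹) ^ t := by rw [hs]
            _ = a * c ^ t * a⁻¹ := (conjz a c t).symm
            _ = a * (b * c * b⁻¹) * a⁻¹ := by rw [ht]
            _ = a * b * c * (a * b)⁻¹ := by group
        · refine Subgroup.mem_zpowers_iff.mpr ⟨t' * s', ?_⟩
          calc c ^ (t' * s') = (c ^ t') ^ s' := by rw [zpow_mul]
            _ = (b⁻¹ * c * b) ^ s' := by rw [ht']
            _ = b⁻¹ * c ^ s' * b := by
                have h1 := conjz b⁻¹ c s'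
                rw [inv_inv] at h1
                exact h1.symm
            _ = b⁻¹ * (a⁻¹ * c * a) * b := by rw [hs']
            _ = (a * b)⁻¹ * c * (a * b) := by group
      inv_mem' := by
        rintro a ⟨h1, h2⟩
        exact ⟨by simpa using h2, by simpa using h1⟩ }
  have hKmem : ∀ g : P, g ∈ K ↔
      (g * c * g⁻¹ ∈ Subgroup.zpowers c ∧ g⁻¹ * c * g ∈ Subgroup.zpowers c) :=
    fun g => Iff.rfl
  have hcK : c ∈ K := by
    rw [hKmem]
    exact ⟨by simpa using Subgroup.mem_zpowers c, by simpa using Subgroup.mem_zpowers c⟩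
  have hhK : h ∈ K := by
    rw [hKmem]
    constructor
    · exact hrel ▸ Subgroup.mem_zpowers_iff.mpr ⟨(j : ℤ), by rw [zpow_natCast]⟩
    · exact hinv ▸ Subgroup.mem_zpowers_iff.mpr ⟨(j' : ℤ), by rw [zpow_natCast]⟩
  have hKtop : K = ⊤ := by
    rw [← top_le_iff, ← hgen, Subgroup.closure_le]
    rintro x (rfl | rfl)
    · exact hcK
    · exact hhK
  -- ⟨c⟩ is normal
  haveI hN : (Subgroup.zpowers c).Normal := by
    constructor
    intro x hx g
    obtain ⟨t, ht⟩ := Subgroup.mem_zpowers_iff.mp hx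
    have hgK : g ∈ K := hKtop ▸ Subgroup.mem_top g
    obtain ⟨s, hs⟩ := Subgroup.mem_zpowers_iff.mp ((hKmem g).mp hgK).1
    refine Subgroup.mem_zpowers_iff.mpr ⟨s * t, ?_⟩
    calc c ^ (s * t) = (c ^ s) ^ t := by rw [zpow_mul]
      _ = (g * c * g⁻¹) ^ t := by rw [hs]
      _ = g * c ^ t * g⁻¹ := (conjz g c t).symm
      _ = g * x * g⁻¹ := by rw [ht]
  -- the quotient
  let π : P →* P ⧸ Subgroup.zpowers c := QuotientGroup.mk' (Subgroup.zpowers c)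
  have hπc : π c = 1 := (QuotientGroup.eq_one_iff c).mpr (Subgroup.mem_zpowers c)
  have hπch : π (c ^ α * h) = π h := by
    rw [map_mul, map_pow, hπc, one_pow, one_mul]
  -- card of quotient
  have hcardN : Nat.card (Subgroup.zpowers c) = p ^ n := by
    rw [Nat.card_zpowers, hc]
  have hpn0 : 0 < p ^ n := by positivity
  have hcardQ : Nat.card (P ⧸ Subgroup.zpowers c) = p ^ m := by
    have h1 := Subgroup.card_eq_card_quotient_mul_card_subgroup (Subgroup.zpowers c)
    rw [hcard, hcardN, pow_add] at h1
    have h2 : p ^ n * p ^ m = p ^ n * Nat.card (P ⧸ Subgroup.zpowers c) := by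
      rw [mul_comm (Nat.card (P ⧸ Subgroup.zpowers c)) (p ^ n)] at h1
      exact h1
    exact (Nat.eq_of_mul_eq_mul_left hpn0 h2).symm
  -- π h generates the quotient
  have hzpow_top : Subgroup.zpowers (π h) = ⊤ := by
    rw [eq_top_iff]
    have hmap := MonoidHom.map_closure π {c, h}
    have hsurj : Function.Surjective π := QuotientGroup.mk'_surjective (Subgroup.zpowers c)
    have htop : Subgroup.map π ⊤ = ⊤ := Subgroup.map_top_of_surjective π hsurj
    rw [hgen, htop] at hmap
    rw [hmap, Subgroup.closure_le]
    rintro x ⟨y, (rfl | rfl), rfl⟩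
    · rw [hπc]; exact Subgroup.one_mem _
    · exact Subgroup.mem_zpowers _
  have hπh : orderOf (π h) = p ^ m := by
    rw [← Nat.card_zpowers, hzpow_top, Subgroup.card_top, hcardQ]
  -- p^m divides the order of c^α h
  have hdvd_order : p ^ m ∣ orderOf (c ^ α * h) := by
    rw [← hπh, ← hπch]
    exact orderOf_map_dvd π (c ^ α * h)
  -- reduce to power condition
  have hiff1 : orderOf (c ^ α * h) = p ^ m ↔ (c ^ α * h) ^ p ^ m = 1 := by
    constructor
    · intro he; rw [← he]; exact pow_orderOf_eq_one _
    · intro he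
      exact Nat.dvd_antisymm (orderOf_dvd_of_pow_eq_one he) hdvd_order
  -- compute the power
  have hhpm : h ^ p ^ m = 1 := by rw [← hh]; exact pow_orderOf_eq_one h
  have hiff2 : (c ^ α * h) ^ p ^ m = 1 ↔ p ^ n ∣ α * ∑ i ∈ Finset.range (p ^ m), j ^ i := by
    rw [hformula (p ^ m), hhpm, mul_one, ← hc, orderOf_dvd_iff_pow_eq_one]
  -- p does not divide α
  have hpα : ¬ p ∣ α := by
    intro hdvd
    have := Nat.le_of_dvd (by omega) hdvd
    omega
  have hcopα : Nat.Coprime (p ^ n) α := ((hp.coprime_iff_not_dvd.mpr hpα).pow_left n)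
  have hiff3 : (p ^ n ∣ α * ∑ i ∈ Finset.range (p ^ m), j ^ i)
      ↔ p ^ n ∣ ∑ i ∈ Finset.range (p ^ m), j ^ i := by
    constructor
    · intro hd
      exact hcopα.dvd_of_dvd_mul_left hd
    · intro hd
      exact Dvd.dvd.mul_left hd α
  -- arithmetic
  have hjdvd : (p : ℤ) ∣ (j : ℤ) - 1 := by
    have hj2 : j ≡ 1 [MOD p] := by
      show j % p = 1 % p
      rw [hj1, Nat.mod_eq_of_lt (by omega)]
    have h4 : (p : ℤ) ∣ (1 : ℤ) - j := by
      simpa using hj2.dvd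
    have h5 : (j : ℤ) - 1 = -((1 : ℤ) - j) := by ring
    rw [h5]
    exact dvd_neg.mpr h4
  rw [hiff1, hiff2, hiff3]
  exact aux_dvd_iff p n m j hp hodd hjdvd
end

section
/- Let P = ⟨c, h | c^{2^n} = h^{2^m} = 1, h c h^{-1} = c^j⟩ with n ≥ 2, j ≡ 3 (mod 4), and the order of j in (ℤ/2^nℤ)^× dividing 2^{m-1}. Then the element c h has order 2^m in P. -/
/-- In `P = ⟨c,h | c^(2^n) = h^(2^m) = 1, h c h⁻¹ = c^j⟩` with `n ≥ 2`,
`j ≡ 3 (mod 4)`, and the order of `j` in `(ℤ/2^nℤ)ˣ` dividing `2^(m-1)`, the element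
`c h` has order `2^m`. -/
theorem stmt_4 (n m j : ℕ) (hn : 2 ≤ n)
    (hj : j % 4 = 3) (hjord : j ^ 2 ^ (m - 1) ≡ 1 [MOD 2 ^ n])
    (P : Type*) [Group P] (c h : P)
    (hc : orderOf c = 2 ^ n) (hh : orderOf h = 2 ^ m)
    (hrel : h * c * h⁻¹ = c ^ j)
    (hgen : Subgroup.closure {c, h} = (⊤ : Subgroup P))
    (hcard : Nat.card P = 2 ^ (n + m)) :
    orderOf (c * h) = 2 ^ m := by
  -- m ≥ 1
  have hm : 1 ≤ m := by
    by_contra hm0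
    have hm0 : m = 0 := by omega
    subst hm0
    have h4 : (4 : ℕ) ∣ 2 ^ n := by
      have : (4 : ℕ) = 2 ^ 2 := by norm_num
      rw [this]; exact pow_dvd_pow 2 hn
    have : j ≡ 1 [MOD 4] := (by simpa using hjord : j ≡ 1 [MOD 2 ^ n]).of_dvd h4
    have : j % 4 = 1 % 4 := this
    omega
  -- basic conjugation facts
  have key : ∀ b : ℕ, h * c ^ b * h⁻¹ = c ^ (b * j) := by
    intro b
    calc h * c ^ b * h⁻¹ = (h * c * h⁻¹) ^ b := by rw [conj_pow]
    _ = (c ^ j) ^ b := by rw [hrel]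
    _ = c ^ (b * j) := by rw [← pow_mul, mul_comm]
  have keyk : ∀ k b : ℕ, h ^ k * c ^ b * (h ^ k)⁻¹ = c ^ (b * j ^ k) := by
    intro k
    induction k with
    | zero => intro b; simp
    | succ k ih =>
      intro b
      have : h ^ (k + 1) * c ^ b * (h ^ (k + 1))⁻¹
          = h ^ k * (h * c ^ b * h⁻¹) * (h ^ k)⁻¹ := by
        rw [pow_succ']; group
      rw [this, key b, ih (b * j), pow_succ']
      ring_nf
  -- power formula for c*h
  have pow_formula : ∀ k : ℕ,
      (c * h) ^ k = c ^ (∑ i ∈ Finset.range k, j ^ i) * h ^ k := by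
    intro k
    induction k with
    | zero => simp
    | succ k ih =>
      rw [pow_succ, ih, Finset.sum_range_succ, pow_add, pow_succ]
      calc c ^ (∑ i ∈ Finset.range k, j ^ i) * h ^ k * (c * h)
          = c ^ (∑ i ∈ Finset.range k, j ^ i) * (h ^ k * c ^ 1 * (h ^ k)⁻¹)
            * (h ^ k * h) := by
            rw [pow_one]
            calc c ^ (∑ i ∈ Finset.range k, j ^ i) * h ^ k * (c * h)
                = c ^ (∑ i ∈ Finset.range k, j ^ i) * (h ^ k * c * ((h ^ k)⁻¹ * h ^ k) * h) := by
                  rw [inv_mul_cancel]; simp [mul_assoc]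
              _ = c ^ (∑ i ∈ Finset.range k, j ^ i) * (h ^ k * c * (h ^ k)⁻¹) * (h ^ k * h) := by
                  simp [mul_assoc]
        _ = c ^ (∑ i ∈ Finset.range k, j ^ i) * c ^ (1 * j ^ k) * (h ^ k * h) := by
            rw [keyk k 1]
        _ = c ^ (∑ i ∈ Finset.range k, j ^ i) * c ^ j ^ k * (h ^ k * h) := by
            rw [one_mul]
  -- arithmetic: 2^(n-1) divides the half geometric sum, 2^n divides the full one
  set S1 : ℕ := ∑ i ∈ Finset.range (2 ^ (m - 1)), j ^ i with hS1
  set S2 : ℕ := ∑ i ∈ Finset.range (2 ^ m), j ^ i with hS2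
  have hcastS1 : ((S1 : ℤ)) = ∑ i ∈ Finset.range (2 ^ (m - 1)), (j : ℤ) ^ i := by
    push_cast [hS1]; ring
  have hdvd1 : (2 : ℤ) ^ (n - 1) ∣ (S1 : ℤ) := by
    have hgeo : ((S1 : ℤ)) * ((j : ℤ) - 1) = (j : ℤ) ^ 2 ^ (m - 1) - 1 := by
      rw [hcastS1]; exact geom_sum_mul _ _
    have hdvd : (2 : ℤ) ^ n ∣ (j : ℤ) ^ 2 ^ (m - 1) - 1 := by
      have := (Nat.modEq_iff_dvd.mp hjord.symm)
      push_cast at this ⊢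
      convert this using 2 <;> push_cast <;> ring
    -- j - 1 = 2 * u with u odd
    obtain ⟨q, hq⟩ : ∃ q, j = 4 * q + 3 := ⟨j / 4, by omega⟩
    have hju : (j : ℤ) - 1 = 2 * (2 * q + 1) := by push_cast [hq]; ring
    have h2 : (2 : ℤ) ^ n = 2 ^ (n - 1) * 2 := by
      rw [← pow_succ]; congr 1; omega
    have hdvd' : (2 : ℤ) ^ (n - 1) * 2 ∣ S1 * (2 * (2 * q + 1)) := by
      rw [← h2, ← hju, hgeo]; exact hdvd
    have hdvd'' : (2 : ℤ) ^ (n - 1) ∣ (2 * q + 1) * S1 := by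
      rcases hdvd' with ⟨t, ht⟩
      exact ⟨t, by linarith⟩
    have hcop : IsCoprime ((2 : ℤ) ^ (n - 1)) (2 * q + 1) := by
      apply IsCoprime.pow_left
      exact ⟨-q, 1, by ring⟩
    exact hcop.dvd_of_dvd_mul_left hdvd''
  have hS2eq : (S2 : ℤ) = (S1 : ℤ) * ((j : ℤ) ^ 2 ^ (m - 1) + 1) := by
    have hsplit : 2 ^ m = 2 ^ (m - 1) + 2 ^ (m - 1) := by
      rw [← two_mul, ← pow_succ']; congr 1; omega
    have : (S2 : ℤ) = ∑ i ∈ Finset.range (2 ^ m), (j : ℤ) ^ i := by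
      push_cast [hS2]; ring
    rw [this, hsplit, Finset.sum_range_add, hcastS1]
    have : ∀ i ∈ Finset.range (2 ^ (m - 1)), (j : ℤ) ^ (2 ^ (m - 1) + i)
        = (j : ℤ) ^ 2 ^ (m - 1) * (j : ℤ) ^ i := fun i _ => pow_add _ _ _
    rw [Finset.sum_congr rfl this, ← Finset.mul_sum]
    ring
  have hdvd2 : (2 : ℕ) ^ n ∣ S2 := by
    have h2 : (2 : ℤ) ∣ (j : ℤ) ^ 2 ^ (m - 1) + 1 := by
      have hodd : Odd (j : ℤ) := by
        rw [Int.odd_iff]; omega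
      rcases (hodd.pow (n := 2 ^ (m - 1))) with ⟨t, ht⟩
      exact ⟨t + 1, by omega⟩
    have : (2 : ℤ) ^ n ∣ (S2 : ℤ) := by
      have hn1 : (2 : ℤ) ^ n = 2 ^ (n - 1) * 2 := by
        rw [← pow_succ]; congr 1; omega
      rw [hn1, hS2eq]
      exact mul_dvd_mul hdvd1 h2
    exact_mod_cast this
  -- (c*h)^(2^m) = 1
  have hpow : (c * h) ^ 2 ^ m = 1 := by
    rw [pow_formula, ← hS2]
    have h1 : c ^ S2 = 1 := orderOf_dvd_iff_pow_eq_one.mp (hc ▸ hdvd2)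
    have h2 : h ^ 2 ^ m = 1 := by rw [← hh]; exact pow_orderOf_eq_one h
    rw [h1, h2, one_mul]
  have hdvdord : orderOf (c * h) ∣ 2 ^ m := orderOf_dvd_iff_pow_eq_one.mpr hpow
  -- finiteness
  have hfin : Finite P := Nat.finite_of_card_ne_zero (by rw [hcard]; positivity)
  -- subgroups
  set C : Subgroup P := Subgroup.zpowers c with hC
  set H' : Subgroup P := Subgroup.zpowers h with hH'
  -- inverse of conjugation
  have hjj : c ^ (j * j ^ (2 ^ (m - 1) - 1)) = c := by
    have : j * j ^ (2 ^ (m - 1) - 1) = j ^ 2 ^ (m - 1) := by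
      rw [← pow_succ']; congr 1
      have : 1 ≤ 2 ^ (m - 1) := Nat.one_le_two_pow
      omega
    rw [this]
    calc c ^ j ^ 2 ^ (m - 1) = c ^ 1 := by
          rw [pow_eq_pow_iff_modEq, hc]; exact hjord
      _ = c := pow_one c
  have hconjinv : h⁻¹ * c * h = c ^ (j ^ (2 ^ (m - 1) - 1)) := by
    have : c = h * c ^ (j ^ (2 ^ (m - 1) - 1)) * h⁻¹ := by
      rw [key, mul_comm (j ^ (2 ^ (m - 1) - 1)) j, hjj]
    calc h⁻¹ * c * h = h⁻¹ * (h * c ^ (j ^ (2 ^ (m - 1) - 1)) * h⁻¹) * h := by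
          rw [← this]
      _ = c ^ (j ^ (2 ^ (m - 1) - 1)) := by group
  -- C is normal
  have hmemc : c ∈ Subgroup.normalizer (C : Set P) := Subgroup.le_normalizer (Subgroup.mem_zpowers c)
  have hmemh : h ∈ Subgroup.normalizer (C : Set P) := by
    rw [Subgroup.mem_normalizer_iff]
    intro g
    constructor
    · rintro ⟨k, rfl⟩
      refine ⟨(j : ℤ) * k, ?_⟩
      show c ^ ((j : ℤ) * k) = h * c ^ k * h⁻¹
      have hck : h * c ^ k * h⁻¹ = (h * c * h⁻¹) ^ k := conj_zpow.symm
      rw [hck, hrel, ← zpow_natCast c j, ← zpow_mul]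
    · rintro ⟨k, hk⟩
      have hk' : c ^ k = h * g * h⁻¹ := hk
      have hg : g = h⁻¹ * (c ^ k : P) * h := by rw [hk']; group
      rw [hg]
      refine ⟨((j ^ (2 ^ (m - 1) - 1) : ℕ) : ℤ) * k, ?_⟩
      show c ^ (((j ^ (2 ^ (m - 1) - 1) : ℕ) : ℤ) * k) = h⁻¹ * c ^ k * h
      have hck : h⁻¹ * c ^ k * (h⁻¹)⁻¹ = (h⁻¹ * c * (h⁻¹)⁻¹) ^ k := conj_zpow.symm
      rw [inv_inv] at hck
      rw [hck, hconjinv, ← zpow_natCast c, ← zpow_mul]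
  have hCnormal : C.Normal := by
    rw [← Subgroup.normalizer_eq_top_iff, ← top_le_iff, ← hgen, Subgroup.closure_le]
    intro x hx
    rcases hx with rfl | hx
    · exact hmemc
    · exact Set.mem_singleton_iff.mp hx ▸ hmemh
  -- C ⊔ H' = ⊤
  have hsupc : c ∈ C ⊔ H' := Subgroup.mem_sup_left (Subgroup.mem_zpowers c)
  have hsuph : h ∈ C ⊔ H' := Subgroup.mem_sup_right (Subgroup.mem_zpowers h)
  have hsup : C ⊔ H' = ⊤ := by
    rw [eq_top_iff, ← hgen, Subgroup.closure_le]
    intro x hx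
    rcases hx with rfl | hx
    · exact hsupc
    · exact Set.mem_singleton_iff.mp hx ▸ hsuph
  -- cardinalities
  have hcardC : Nat.card C = 2 ^ n := by rw [hC, Nat.card_zpowers, hc]
  have hcardH : Nat.card H' = 2 ^ m := by rw [hH', Nat.card_zpowers, hh]
  have hindexC : C.index = 2 ^ m := by
    have := C.card_mul_index
    rw [hcardC, hcard, pow_add] at this
    have h2n : (2 : ℕ) ^ n ≠ 0 := by positivity
    exact Nat.eq_of_mul_eq_mul_left (by positivity) this
  have hrelindex : C.relIndex H' = 2 ^ m := by
    have h1 : C.relIndex (H' ⊔ C) = C.relIndex H' := Subgroup.relIndex_sup_right H' C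
    rw [sup_comm] at hsup
    rw [hsup, Subgroup.relIndex_top_right] at h1
    rw [← h1, hindexC]
  -- C ⊓ H' is trivial
  have hbot : C.subgroupOf H' = ⊥ := by
    rw [← Subgroup.card_eq_one]
    have := (C.subgroupOf H').card_mul_index
    rw [hcardH] at this
    have hidx : (C.subgroupOf H').index = C.relIndex H' := rfl
    rw [hidx, hrelindex] at this
    have h1 : Nat.card ↥(C.subgroupOf H') * 2 ^ m = 1 * 2 ^ m := by
      rw [this, one_mul]
    exact Nat.eq_of_mul_eq_mul_right (by positivity) h1
  have htriv : ∀ x : P, x ∈ C → x ∈ H' → x = 1 := by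
    intro x hxC hxH
    have : (⟨x, hxH⟩ : H') ∈ C.subgroupOf H' := Subgroup.mem_subgroupOf.mpr hxC
    rw [hbot, Subgroup.mem_bot] at this
    exact congrArg Subtype.val this
  -- (c*h)^(2^(m-1)) ≠ 1
  have hne : (c * h) ^ 2 ^ (m - 1) ≠ 1 := by
    intro heq
    rw [pow_formula, ← hS1] at heq
    have hhS : h ^ 2 ^ (m - 1) = (c ^ S1)⁻¹ := eq_inv_of_mul_eq_one_right heq
    have hmem : h ^ 2 ^ (m - 1) ∈ C := by
      rw [hhS]
      exact C.inv_mem ⟨(S1 : ℤ), zpow_natCast c S1⟩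
    have hmemH : h ^ 2 ^ (m - 1) ∈ H' := ⟨((2 ^ (m - 1) : ℕ) : ℤ), zpow_natCast h _⟩
    have h1 : h ^ 2 ^ (m - 1) = 1 := htriv _ hmem hmemH
    have : orderOf h ∣ 2 ^ (m - 1) := orderOf_dvd_iff_pow_eq_one.mpr h1
    rw [hh] at this
    have := Nat.le_of_dvd (by positivity) this
    have : 2 ^ (m - 1) < 2 ^ m := Nat.pow_lt_pow_right (by norm_num) (by omega)
    omega
  -- conclude
  obtain ⟨k, hk, hkeq⟩ := (Nat.dvd_prime_pow Nat.prime_two).mp hdvdord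
  rcases eq_or_lt_of_le hk with rfl | hlt
  · exact hkeq
  · exfalso
    apply hne
    apply orderOf_dvd_iff_pow_eq_one.mp
    rw [hkeq]
    exact pow_dvd_pow 2 (by omega)
end

section
/- Let P = (K ⋊ ⟨h⟩) where K is semidihedral of order 2^{n+1} (n ≥ 3), h of order 2^m acting by h c h^{-1} = c^j, h x h^{-1} = x (i.e. k = 0). If the subgroup ⟨c^r h, c^s x⟩ of P has its two listed generators commuting and (c^s x)^2 = 1, then both r and s are even. -/
/-- `P = K ⋊ ⟨h⟩` with `K` semidihedral of order `2^(n+1)` (`n ≥ 3`),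
`h` of order `2^m` with `h c h⁻¹ = c^j` (`j` odd) and `h x h⁻¹ = x`. If the two
listed generators of `⟨c^r h, c^s x⟩` commute and `(c^s x)^2 = 1`, then `r` and `s`
are both even. -/
theorem stmt_7 (n m j : ℕ) (hn : 3 ≤ n) (hj : Odd j)
    (P : Type*) [Group P] (c x h : P)
    (hc : orderOf c = 2 ^ n) (hx : orderOf x = 2)
    (hxc : x * c * x = c ^ (2 ^ (n - 1) - 1))
    (hh : orderOf h = 2 ^ m)
    (hhc : h * c * h⁻¹ = c ^ j)
    (hhx : h * x * h⁻¹ = x)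
    (hgen : Subgroup.closure {c, x, h} = (⊤ : Subgroup P))
    (hcard : Nat.card P = 2 ^ (n + 1 + m))
    (r s : ℕ)
    (hcomm : (c ^ r * h) * (c ^ s * x) = (c ^ s * x) * (c ^ r * h))
    (hinv : (c ^ s * x) ^ 2 = 1) :
    Even r ∧ Even s := by
  obtain ⟨a, ha⟩ := hj
  set t : ℕ := 2 ^ (n - 1) - 1 with ht
  have hn1 : 1 ≤ 2 ^ (n - 1) := Nat.one_le_two_pow
  have hx2 : x * x = 1 := by
    have := pow_orderOf_eq_one x
    rwa [hx, pow_two] at this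
  have hxinv : x⁻¹ = x := inv_eq_of_mul_eq_one_right hx2
  have hxpow : ∀ u : ℕ, x * c ^ u = c ^ (t * u) * x := by
    intro u
    have h1 : x * c ^ u * x⁻¹ = (x * c * x⁻¹) ^ u := by rw [conj_pow]
    rw [hxinv, hxc, ← pow_mul] at h1
    calc x * c ^ u = (x * c ^ u * x) * x := by
          rw [mul_assoc, hx2, mul_one]
      _ = c ^ (t * u) * x := by rw [h1]
  have hhpow : h * c ^ s = c ^ (j * s) * h := by
    have h1 : h * c ^ s * h⁻¹ = (h * c * h⁻¹) ^ s := by rw [conj_pow]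
    rw [hhc, ← pow_mul] at h1
    calc h * c ^ s = (h * c ^ s * h⁻¹) * h := by group
      _ = c ^ (j * s) * h := by rw [h1]
  have hhx' : h * x = x * h := by
    calc h * x = (h * x * h⁻¹) * h := by group
      _ = x * h := by rw [hhx]
  -- commutation equation
  have L : (c ^ r * h) * (c ^ s * x) = c ^ (r + j * s) * (x * h) := by
    calc (c ^ r * h) * (c ^ s * x) = c ^ r * (h * c ^ s) * x := by group
      _ = c ^ r * (c ^ (j * s) * h) * x := by rw [hhpow]
      _ = c ^ (r + j * s) * (h * x) := by rw [pow_add]; group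
      _ = c ^ (r + j * s) * (x * h) := by rw [hhx']
  have R : (c ^ s * x) * (c ^ r * h) = c ^ (s + t * r) * (x * h) := by
    calc (c ^ s * x) * (c ^ r * h) = c ^ s * (x * c ^ r) * h := by group
      _ = c ^ s * (c ^ (t * r) * x) * h := by rw [hxpow]
      _ = c ^ (s + t * r) * (x * h) := by rw [pow_add]; group
  have heq : c ^ (r + j * s) = c ^ (s + t * r) :=
    mul_right_cancel (L ▸ R ▸ hcomm)
  have hmod : r + j * s ≡ s + t * r [MOD 2 ^ n] := by
    rw [← hc]; exact pow_eq_pow_iff_modEq.mp heq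
  -- square equation
  have hsq : c ^ ((1 + t) * s) = 1 := by
    have e : (c ^ s * x) ^ 2 = c ^ ((1 + t) * s) := by
      calc (c ^ s * x) ^ 2 = c ^ s * (x * c ^ s) * x := by rw [pow_two]; group
        _ = c ^ s * (c ^ (t * s) * x) * x := by rw [hxpow]
        _ = c ^ (s + t * s) * (x * x) := by rw [pow_add]; group
        _ = c ^ ((1 + t) * s) := by rw [hx2, mul_one, add_mul, one_mul]
    rw [← e, hinv]
  have hts : 1 + t = 2 ^ (n - 1) := by omega
  have hdvd : 2 ^ n ∣ 2 ^ (n - 1) * s := by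
    rw [← hts, ← hc]; exact orderOf_dvd_of_pow_eq_one hsq
  have hs : 2 ∣ s := by
    obtain ⟨k, hk⟩ := hdvd
    have hn' : 2 ^ n = 2 ^ (n - 1) * 2 := by
      rw [← pow_succ]; congr 1; omega
    rw [hn', mul_assoc] at hk
    have := Nat.eq_of_mul_eq_mul_left (Nat.pos_of_ne_zero (by positivity)) hk
    exact ⟨k, this⟩
  obtain ⟨b, hb⟩ := hs
  refine ⟨?_, ⟨b, by omega⟩⟩
  -- r even
  set p : ℕ := 2 ^ (n - 3) with hp
  have h4p : 2 ^ (n - 1) = 4 * p := by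
    have : n - 1 = (n - 3) + 2 := by omega
    rw [this, pow_add]; ring
  have h8p : 2 ^ n = 8 * p := by
    have : n = (n - 3) + 3 := by omega
    rw [this, pow_add]; ring
  have hint : ((2 : ℤ) ^ n) ∣ (((s + t * r : ℕ)) : ℤ) - ((r + j * s : ℕ) : ℤ) := by
    exact_mod_cast hmod.dvd
  obtain ⟨k, hk⟩ := hint
  have htz : (t : ℤ) = 4 * (p : ℤ) - 1 := by
    rw [ht, Nat.cast_sub hn1, h4p]; push_cast; ring
  have h8z : ((2 : ℤ) ^ n) = 8 * (p : ℤ) := by exact_mod_cast h8p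
  rw [h8z] at hk
  push_cast [htz, ha, hb] at hk
  have hr : (r : ℤ) = 2 * ((p : ℤ) * r - a * b - 2 * p * k) := by nlinarith [hk]
  have : Even (r : ℤ) := ⟨(p : ℤ) * r - a * b - 2 * p * k, by linarith⟩
  exact_mod_cast this
end

section
/- Let P = K ⋊ ⟨h⟩ where K is generalized quaternion of order 2^{n+1} (n ≥ 2), h of order 2^m, with h x h^{-1} = c^k x and h c h^{-1} = c^j, j odd, k odd, and j^{2^{m-1}} ≡ 1 (mod 2^n). Then the element h x c^r (for any r) satisfies (hxc^r)^{2^m} = c^e with v_2(e) = m − 1; in particular hxc^r has order 2^m if and only if m − 1 ≥ n. -/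
set_option maxHeartbeats 1000000


private lemma pow_semiconj {G : Type*} [Group G] {g c : G} {q : ℕ} (h1 : g * c = c ^ q * g) :
    ∀ d a : ℕ, g ^ d * c ^ a = c ^ (q ^ d * a) * g ^ d := by
  have h2 : ∀ b : ℕ, g * c ^ b = c ^ (q * b) * g := by
    intro b
    induction b with
    | zero => simp
    | succ b ihb =>
      rw [pow_succ, ← mul_assoc, ihb, mul_assoc, h1, ← mul_assoc, ← pow_add]
      have e1 : q * b + q = q * (b + 1) := by ring
      rw [e1]
  intro d
  induction d with
  | zero => simp
  | succ d ih =>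
    intro a
    rw [pow_succ', mul_assoc, ih, ← mul_assoc, h2, mul_assoc, ← pow_succ']
    have e1 : q * (q ^ d * a) = q ^ (d + 1) * a := by ring
    rw [e1]

private lemma pow_semiconj' {G : Type*} [Group G] {g c : G} {q : ℕ} (h1 : c * g = g * c ^ q) :
    ∀ d a : ℕ, c ^ a * g ^ d = g ^ d * c ^ (q ^ d * a) := by
  have h2 : ∀ b : ℕ, c ^ b * g = g * c ^ (q * b) := by
    intro b
    induction b with
    | zero => simp
    | succ b ihb =>
      rw [pow_succ, mul_assoc, h1, ← mul_assoc, ihb, mul_assoc, ← pow_add]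
      have e1 : q * b + q = q * (b + 1) := by ring
      rw [e1]
  intro d
  induction d with
  | zero => simp
  | succ d ih =>
    intro a
    rw [pow_succ, ← mul_assoc, ih, mul_assoc, h2, ← mul_assoc, ← pow_succ]
    have e1 : q * (q ^ d * a) = q ^ (d + 1) * a := by ring
    rw [e1]



/-- `P = K ⋊ ⟨h⟩` with `K` generalised quaternion of order `2^(n+1)`
(`n ≥ 2`), `h` of order `2^m`, `h x h⁻¹ = c^k x`, `h c h⁻¹ = c^j`, `j` odd, `k` odd,
`j^(2^(m-1)) ≡ 1 (mod 2^n)`. Then `(h x c^r)^(2^m) = c^e` with `v₂(e) = m − 1`; in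
particular `h x c^r` has order `2^m` if and only if `m − 1 ≥ n`. -/
theorem stmt_8 (n m j k : ℕ) (hn : 2 ≤ n) (hm : 1 ≤ m)
    (hj : Odd j) (hk : Odd k)
    (hjord : j ^ 2 ^ (m - 1) ≡ 1 [MOD 2 ^ n])
    (P : Type*) [Group P] (c x h : P)
    (hc : orderOf c = 2 ^ n)
    (hx2 : x ^ 2 = c ^ 2 ^ (n - 1))
    (hxc : x⁻¹ * c * x = c⁻¹)
    (hh : orderOf h = 2 ^ m)
    (hhc : h * c * h⁻¹ = c ^ j)
    (hhx : h * x * h⁻¹ = c ^ k * x)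
    (hgen : Subgroup.closure {c, x, h} = (⊤ : Subgroup P))
    (hcard : Nat.card P = 2 ^ (n + 1 + m))
    (r : ℕ) :
    (∃ e : ℕ, (h * x * c ^ r) ^ 2 ^ m = c ^ e ∧ padicValNat 2 e = m - 1) ∧
    (orderOf (h * x * c ^ r) = 2 ^ m ↔ n ≤ m - 1) := by
  have hcN : c ^ 2 ^ n = 1 := by rw [← hc]; exact pow_orderOf_eq_one c
  have hhM : h ^ 2 ^ m = 1 := by rw [← hh]; exact pow_orderOf_eq_one h
  set u : ℕ := 2 ^ n - 1 with hu
  have hu1 : u + 1 = 2 ^ n := Nat.sub_add_cancel Nat.one_le_two_pow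
  have cmod : ∀ a : ℕ, c ^ (a % 2 ^ n) = c ^ a := by
    intro a; rw [← hc]; exact pow_mod_orderOf c a
  have cneg : ∀ a : ℕ, c ^ (u * a) = (c ^ a)⁻¹ := by
    intro a
    refine eq_inv_of_mul_eq_one_left ?_
    rw [← pow_add]
    have h1 : u * a + a = 2 ^ n * a := by rw [← hu1]; ring
    rw [h1, pow_mul, hcN, one_pow]
  -- h vs c
  have hstep : h * c = c ^ j * h := by rw [← hhc]; group
  have sc : ∀ d a : ℕ, h ^ d * c ^ a = c ^ (j ^ d * a) * h ^ d := pow_semiconj hstep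
  set j' : ℕ := j ^ (2 ^ m - 1) with hj'
  have hinvm : h ^ (2 ^ m - 1) = h⁻¹ := by
    refine eq_inv_of_mul_eq_one_left ?_
    rw [← pow_succ]
    have : 2 ^ m - 1 + 1 = 2 ^ m := Nat.sub_add_cancel Nat.one_le_two_pow
    rw [this, hhM]
  have hstep' : h⁻¹ * c = c ^ j' * h⁻¹ := by
    have := sc (2 ^ m - 1) 1
    simpa [hinvm] using this
  have scR : ∀ d a : ℕ, c ^ a * h ^ d = h ^ d * c ^ (j' ^ d * a) := by
    refine pow_semiconj' ?_
    have := hstep'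
    calc c * h = h * (h⁻¹ * c) * h := by group
      _ = h * (c ^ j' * h⁻¹) * h := by rw [this]
      _ = h * c ^ j' := by group
  have cjj : ∀ a : ℕ, c ^ (j ^ 2 ^ m * a) = c ^ a := by
    intro a
    have := sc (2 ^ m) a
    rw [hhM, one_mul, mul_one] at this
    exact this.symm
  -- x vs c
  have hxcc : c * x = x * c⁻¹ := by
    calc c * x = x * (x⁻¹ * c * x) := by group
      _ = x * c⁻¹ := by rw [hxc]
  have cneg1 : c ^ u = c⁻¹ := by
    have := cneg 1
    simpa using this
  have hxcinv : x⁻¹ * c⁻¹ * x = c := by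
    have h1 := congrArg Inv.inv hxc
    simpa [mul_inv_rev, mul_assoc] using h1
  have xstep : x * c = c ^ u * x := by
    rw [cneg1]
    calc x * c = x * (x⁻¹ * c⁻¹ * x) := by rw [hxcinv]
      _ = c⁻¹ * x := by group
  have scx : ∀ b a : ℕ, x ^ b * c ^ a = c ^ (u ^ b * a) * x ^ b := pow_semiconj xstep
  have scxR : ∀ b a : ℕ, c ^ a * x ^ b = x ^ b * c ^ (u ^ b * a) := by
    refine pow_semiconj' ?_
    rw [cneg1, hxcc]
  -- h vs x
  have hxstep : h * x = c ^ k * x * h := by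
    calc h * x = (h * x * h⁻¹) * h := by group
      _ = c ^ k * x * h := by rw [hhx]
  have hicx : h⁻¹ * c ^ k = c ^ (j' * k) * h⁻¹ := by
    have := pow_semiconj hstep' 1 k
    simpa using this
  have xh : x * h = h * (c ^ (u * (j' * k)) * x) := by
    have e1 : h⁻¹ * x * h = c ^ (u * (j' * k)) * x := by
      have e2 : x = c ^ (j' * k) * (h⁻¹ * x * h) := by
        calc x = h⁻¹ * (c ^ k * x * h) := by rw [← hxstep]; group
          _ = (h⁻¹ * c ^ k) * x * h := by group
          _ = (c ^ (j' * k) * h⁻¹) * x * h := by rw [hicx]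
          _ = c ^ (j' * k) * (h⁻¹ * x * h) := by group
      calc h⁻¹ * x * h = (c ^ (j' * k))⁻¹ * (c ^ (j' * k) * (h⁻¹ * x * h)) := by group
        _ = (c ^ (j' * k))⁻¹ * x := by rw [← e2]
        _ = c ^ (u * (j' * k)) * x := by rw [cneg]
    calc x * h = h * (h⁻¹ * x * h) := by group
      _ = h * (c ^ (u * (j' * k)) * x) := by rw [e1]
  -- the square of g
  set s : ℕ := u * (j' * k) + 2 ^ (n - 1) + (u ^ 1 * (j' ^ 1 * r) + r) with hs
  have xx : x * x = c ^ 2 ^ (n - 1) := by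
    rw [← hx2]; rw [sq]
  have gsq : (h * x * c ^ r) * (h * x * c ^ r) = h ^ 2 * c ^ s := by
    calc (h * x * c ^ r) * (h * x * c ^ r)
        = h * x * (c ^ r * h ^ 1) * x * c ^ r := by group
      _ = h * x * (h ^ 1 * c ^ (j' ^ 1 * r)) * x * c ^ r := by rw [scR 1 r]
      _ = h * (x * h) * (c ^ (j' ^ 1 * r) * x ^ 1) * c ^ r := by group
      _ = h * (h * (c ^ (u * (j' * k)) * x)) * (c ^ (j' ^ 1 * r) * x ^ 1) * c ^ r := by
          rw [xh]
      _ = h * (h * (c ^ (u * (j' * k)) * x)) * (x ^ 1 * c ^ (u ^ 1 * (j' ^ 1 * r))) * c ^ r := by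
          rw [scxR 1 (j' ^ 1 * r)]
      _ = h ^ 2 * (c ^ (u * (j' * k)) * (x * x) * (c ^ (u ^ 1 * (j' ^ 1 * r)) * c ^ r)) := by
          simp [pow_succ, mul_assoc]
      _ = h ^ 2 * (c ^ (u * (j' * k)) * c ^ 2 ^ (n - 1) * (c ^ (u ^ 1 * (j' ^ 1 * r)) * c ^ r)) := by
          rw [xx]
      _ = h ^ 2 * c ^ s := by rw [← pow_add, ← pow_add, ← pow_add]
  -- powers of h^2 * c^s
  set w : ℕ := j' ^ 2 with hw
  set T : ℕ → ℕ := fun t => ∑ i ∈ Finset.range t, w ^ i with hT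
  have hpow : ∀ t : ℕ, (h ^ 2 * c ^ s) ^ t = h ^ (2 * t) * c ^ (s * T t) := by
    intro t
    induction t with
    | zero => simp [hT]
    | succ t ih =>
      calc (h ^ 2 * c ^ s) ^ (t + 1) = (h ^ 2 * c ^ s) ^ t * (h ^ 2 * c ^ s) := by
            rw [pow_succ]
        _ = h ^ (2 * t) * (c ^ (s * T t) * h ^ 2) * c ^ s := by rw [ih]; group
        _ = h ^ (2 * t) * (h ^ 2 * c ^ (j' ^ 2 * (s * T t))) * c ^ s := by
            rw [scR 2 (s * T t)]
        _ = h ^ (2 * (t + 1)) * c ^ (j' ^ 2 * (s * T t) + s) := by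
            simp only [mul_add, mul_one, pow_add, mul_assoc]
        _ = h ^ (2 * (t + 1)) * c ^ (s * T (t + 1)) := by
            congr 1
            have e1 : T (t + 1) = w * T t + 1 := by
              simp only [hT]
              exact geom_sum_succ
            rw [e1, hw]
            ring
  -- T on powers of two: T (p + q) = T p + w^p * T q
  have Tadd : ∀ p q : ℕ, T (p + q) = T p + w ^ p * T q := by
    intro p q
    induction q with
    | zero => simp [hT]
    | succ q ih =>
      have e1 : p + (q + 1) = (p + q) + 1 := by ring
      rw [e1]
      simp only [hT] at ih ⊢
      rw [Finset.sum_range_succ, Finset.sum_range_succ, ih, mul_add, pow_add]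
      ring
  have Tfact : ∀ a : ℕ, ∃ q : ℕ, Odd q ∧ T (2 ^ a) = 2 ^ a * q := by
    intro a
    induction a with
    | zero => exact ⟨1, odd_one, by simp [hT]⟩
    | succ a ih =>
      obtain ⟨q, hq, hTq⟩ := ih
      have hz : Odd (j' ^ 2 ^ a) := hj.pow.pow
      obtain ⟨v, hv⟩ := hz
      have hww : w ^ 2 ^ a = j' ^ 2 ^ a * j' ^ 2 ^ a := by
        rw [hw, sq, mul_pow]
      have e2 : 1 + w ^ 2 ^ a = 2 * (2 * (v * v + v) + 1) := by
        rw [hww, hv]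
        ring
      refine ⟨q * (2 * (v * v + v) + 1), hq.mul (odd_two_mul_add_one _), ?_⟩
      have e3 : (2:ℕ) ^ (a + 1) = 2 ^ a + 2 ^ a := by ring
      rw [e3, Tadd, hTq]
      have e4 : 2 ^ a * q + w ^ 2 ^ a * (2 ^ a * q) = 2 ^ a * q * (1 + w ^ 2 ^ a) := by ring
      rw [e4, e2]
      ring
  -- iterated powers of g
  set g : P := h * x * c ^ r with hg
  have gpow : ∀ t : ℕ, g ^ 2 ^ (t + 1) = h ^ 2 ^ (t + 1) * c ^ (s * T (2 ^ t)) := by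
    intro t
    have e1 : (2:ℕ) ^ (t + 1) = 2 * 2 ^ t := by ring
    rw [e1, pow_mul, sq, gsq, hpow]
  -- parity of s
  have h2n1 : (2:ℕ) ^ n = 2 * 2 ^ (n - 1) := by
    rw [← pow_succ']
    congr 1
    omega
  have hupar : u % 2 = 1 := by
    omega
  have hj'odd : Odd j' := hj.pow
  have hsodd : Odd s := by
    have p1 : (u * (j' * k)) % 2 = 1 := by
      have := Nat.odd_iff.mp ((Nat.odd_iff.mpr hupar).mul (hj'odd.mul hk))
      exact this
    have p2 : (2:ℕ) ^ (n - 1) % 2 = 0 := by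
      have h1 : (2:ℕ) ^ (n - 1) = 2 * 2 ^ (n - 2) := by
        rw [← pow_succ']
        congr 1
        omega
      omega
    have p3 : (u * (j' * r) + r) % 2 = 0 := by
      rcases Nat.even_or_odd r with hr | hr
      · have h0 : Even (u * (j' * r)) := (hr.mul_left j').mul_left u
        have h1 := Nat.even_iff.mp h0
        have h2 := Nat.even_iff.mp hr
        omega
      · have h0 : Odd (u * (j' * r)) := (Nat.odd_iff.mpr hupar).mul (hj'odd.mul hr)
        have h1 := Nat.odd_iff.mp h0
        have h2 := Nat.odd_iff.mp hr
        omega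
    rw [Nat.odd_iff, hs]
    simp only [pow_one]
    omega
  -- the exponent e
  obtain ⟨q, hqodd, hTq⟩ := Tfact (m - 1)
  set e : ℕ := s * T (2 ^ (m - 1)) with he
  have hefact : e = 2 ^ (m - 1) * (s * q) := by
    rw [he, hTq]; ring
  have hsq_odd : Odd (s * q) := hsodd.mul hqodd
  have ge : g ^ 2 ^ m = c ^ e := by
    have e1 : m = (m - 1) + 1 := by omega
    rw [e1, gpow (m - 1), ← e1, hhM, one_mul]
  have hval : padicValNat 2 e = m - 1 := by
    haveI : Fact (Nat.Prime 2) := ⟨Nat.prime_two⟩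
    have hne : s * q ≠ 0 := by
      intro h0
      rw [h0] at hsq_odd
      simp [Nat.odd_iff] at hsq_odd
    have hnd : ¬ (2 ∣ s * q) := by
      rw [Nat.two_dvd_ne_zero]
      exact Nat.odd_iff.mp hsq_odd
    rw [hefact, padicValNat.mul (by positivity) hne, padicValNat.prime_pow,
      padicValNat.eq_zero_of_not_dvd hnd]
    omega
  -- canonical forms
  have hmodh : ∀ dd : ℕ, h ^ (dd % 2 ^ m) = h ^ dd := by
    intro dd; rw [← hh]; exact pow_mod_orderOf h dd
  have x4 : x ^ 4 = 1 := by
    have e1 : x ^ 4 = (x ^ 2) ^ 2 := by rw [← pow_mul]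
    rw [e1, hx2, ← pow_mul]
    have e2 : 2 ^ (n - 1) * 2 = 2 ^ n := by omega
    rw [e2, hcN]
  have hdx1 : ∀ d : ℕ, ∃ κ : ℕ, h ^ d * x = c ^ κ * x * h ^ d := by
    intro d
    induction d with
    | zero => exact ⟨0, by simp⟩
    | succ d ih =>
      obtain ⟨κ, hκ⟩ := ih
      have e2 : h * c ^ κ = c ^ (j * κ) * h := by
        have := sc 1 κ
        simpa using this
      refine ⟨j * κ + k, ?_⟩
      calc h ^ (d + 1) * x = h * (h ^ d * x) := by rw [pow_succ']; group
        _ = h * (c ^ κ * x * h ^ d) := by rw [hκ]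
        _ = (h * c ^ κ) * x * h ^ d := by group
        _ = (c ^ (j * κ) * h) * x * h ^ d := by rw [e2]
        _ = c ^ (j * κ) * (h * x) * h ^ d := by group
        _ = c ^ (j * κ) * (c ^ k * x * h) * h ^ d := by rw [hxstep]
        _ = (c ^ (j * κ) * c ^ k) * x * (h * h ^ d) := by group
        _ = c ^ (j * κ + k) * x * h ^ (d + 1) := by rw [← pow_add, pow_succ']
  have hdxb : ∀ d b : ℕ, ∃ κ : ℕ, h ^ d * x ^ b = c ^ κ * x ^ b * h ^ d := by
    intro d b
    induction b with
    | zero => exact ⟨0, by simp⟩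
    | succ b ih =>
      obtain ⟨κ, hκ⟩ := ih
      obtain ⟨κ₁, hκ₁⟩ := hdx1 d
      refine ⟨κ + u ^ b * κ₁, ?_⟩
      calc h ^ d * x ^ (b + 1) = (h ^ d * x ^ b) * x := by rw [pow_succ]; group
        _ = (c ^ κ * x ^ b) * (h ^ d * x) := by rw [hκ]; group
        _ = (c ^ κ * x ^ b) * (c ^ κ₁ * x * h ^ d) := by rw [hκ₁]
        _ = c ^ κ * (x ^ b * c ^ κ₁) * x * h ^ d := by group
        _ = c ^ κ * (c ^ (u ^ b * κ₁) * x ^ b) * x * h ^ d := by rw [scx]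
        _ = (c ^ κ * c ^ (u ^ b * κ₁)) * (x ^ b * x) * h ^ d := by group
        _ = c ^ (κ + u ^ b * κ₁) * x ^ (b + 1) * h ^ d := by rw [← pow_add, ← pow_succ]
  have reord : ∀ dd bb aa : ℕ, ∃ a' : ℕ,
      h ^ dd * (x ^ bb * c ^ aa) = c ^ a' * x ^ bb * h ^ dd := by
    intro dd bb aa
    obtain ⟨κ, hκ⟩ := hdxb dd bb
    refine ⟨j ^ dd * (u ^ bb * aa) + κ, ?_⟩
    calc h ^ dd * (x ^ bb * c ^ aa)
        = h ^ dd * (c ^ (u ^ bb * aa) * x ^ bb) := by rw [scx]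
      _ = (h ^ dd * c ^ (u ^ bb * aa)) * x ^ bb := by group
      _ = (c ^ (j ^ dd * (u ^ bb * aa)) * h ^ dd) * x ^ bb := by rw [sc]
      _ = c ^ (j ^ dd * (u ^ bb * aa)) * (h ^ dd * x ^ bb) := by group
      _ = c ^ (j ^ dd * (u ^ bb * aa)) * (c ^ κ * x ^ bb * h ^ dd) := by rw [hκ]
      _ = (c ^ (j ^ dd * (u ^ bb * aa)) * c ^ κ) * x ^ bb * h ^ dd := by group
      _ = c ^ (j ^ dd * (u ^ bb * aa) + κ) * x ^ bb * h ^ dd := by rw [← pow_add]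
  have hm1 : (1:ℕ) ≤ 2 ^ m := Nat.one_le_two_pow
  let S : Subgroup P :=
    { carrier := {p : P | ∃ a b d : ℕ, p = c ^ a * x ^ b * h ^ d}
      one_mem' := ⟨0, 0, 0, by simp⟩
      mul_mem' := by
        rintro p1 p2 ⟨a, b, d, rfl⟩ ⟨a2, b2, d2, rfl⟩
        obtain ⟨κ, hκ⟩ := hdxb d b2
        refine ⟨a + (u ^ b * (j ^ d * a2) + u ^ b * κ), b + b2, d + d2, ?_⟩
        calc c ^ a * x ^ b * h ^ d * (c ^ a2 * x ^ b2 * h ^ d2)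
            = c ^ a * x ^ b * (h ^ d * c ^ a2) * x ^ b2 * h ^ d2 := by group
          _ = c ^ a * x ^ b * (c ^ (j ^ d * a2) * h ^ d) * x ^ b2 * h ^ d2 := by rw [sc]
          _ = c ^ a * (x ^ b * c ^ (j ^ d * a2)) * (h ^ d * x ^ b2) * h ^ d2 := by group
          _ = c ^ a * (c ^ (u ^ b * (j ^ d * a2)) * x ^ b) * (c ^ κ * x ^ b2 * h ^ d) * h ^ d2 := by
              rw [scx, hκ]
          _ = c ^ a * c ^ (u ^ b * (j ^ d * a2)) * (x ^ b * c ^ κ) * x ^ b2 * (h ^ d * h ^ d2) := by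
              group
          _ = c ^ a * c ^ (u ^ b * (j ^ d * a2)) * (c ^ (u ^ b * κ) * x ^ b) * x ^ b2 *
                (h ^ d * h ^ d2) := by rw [scx]
          _ = (c ^ a * (c ^ (u ^ b * (j ^ d * a2)) * c ^ (u ^ b * κ))) * (x ^ b * x ^ b2) *
                (h ^ d * h ^ d2) := by group
          _ = c ^ (a + (u ^ b * (j ^ d * a2) + u ^ b * κ)) * x ^ (b + b2) * h ^ (d + d2) := by
              rw [← pow_add, ← pow_add, ← pow_add, ← pow_add]
      inv_mem' := by
        rintro p ⟨a, b, d, rfl⟩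
        have hD : h ^ d * h ^ (2 ^ m * (d + 1) - d) = 1 := by
          rw [← pow_add]
          have e1 : d + (2 ^ m * (d + 1) - d) = 2 ^ m * (d + 1) := by
            have : d ≤ 2 ^ m * (d + 1) := by nlinarith
            omega
          rw [e1, pow_mul, hhM, one_pow]
        have hB : x ^ b * x ^ (4 * (b + 1) - b) = 1 := by
          rw [← pow_add]
          have e1 : b + (4 * (b + 1) - b) = 4 * (b + 1) := by omega
          rw [e1, pow_mul, x4, one_pow]
        have hA : c ^ a * c ^ (2 ^ n * (a + 1) - a) = 1 := by
          rw [← pow_add]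
          have e1 : a + (2 ^ n * (a + 1) - a) = 2 ^ n * (a + 1) := by
            have : a ≤ 2 ^ n * (a + 1) := by nlinarith
            omega
          rw [e1, pow_mul, hcN, one_pow]
        set D := 2 ^ m * (d + 1) - d
        set B := 4 * (b + 1) - b
        set A := 2 ^ n * (a + 1) - a
        have hone : (c ^ a * x ^ b * h ^ d) * (h ^ D * (x ^ B * c ^ A)) = 1 := by
          calc (c ^ a * x ^ b * h ^ d) * (h ^ D * (x ^ B * c ^ A))
              = c ^ a * (x ^ b * ((h ^ d * h ^ D) * (x ^ B * c ^ A))) := by group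
            _ = c ^ a * (x ^ b * (x ^ B * c ^ A)) := by rw [hD, one_mul]
            _ = c ^ a * ((x ^ b * x ^ B) * c ^ A) := by group
            _ = c ^ a * (c ^ A) := by rw [hB, one_mul]
            _ = 1 := hA
        obtain ⟨a', ha'⟩ := reord D B A
        exact ⟨a', B, D, by rw [inv_eq_of_mul_eq_one_right hone, ha']⟩ }
  have hStop : ∀ p : P, ∃ a b d : ℕ, p = c ^ a * x ^ b * h ^ d := by
    intro p
    have hle : Subgroup.closure {c, x, h} ≤ S := by
      rw [Subgroup.closure_le]
      intro y hy
      simp only [Set.mem_insert_iff, Set.mem_singleton_iff] at hy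
      rcases hy with hy | hy | hy
      · exact ⟨1, 0, 0, by simp [hy]⟩
      · exact ⟨0, 1, 0, by simp [hy]⟩
      · exact ⟨0, 0, 1, by simp [hy]⟩
    have hp : p ∈ S := by
      have h2 : (⊤ : Subgroup P) ≤ S := by rw [← hgen]; exact hle
      exact h2 (Subgroup.mem_top p)
    exact hp
  haveI : Finite P := Nat.finite_of_card_ne_zero (by rw [hcard]; positivity)
  haveI : Fintype P := Fintype.ofFinite P
  set f : Fin (2 ^ n) × Fin 2 × Fin (2 ^ m) → P :=
    fun t => c ^ (t.1 : ℕ) * x ^ (t.2.1 : ℕ) * h ^ (t.2.2 : ℕ) with hf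
  have hfsurj : Function.Surjective f := by
    intro p
    obtain ⟨a, b, d, rfl⟩ := hStop p
    have hxb : x ^ b = c ^ (2 ^ (n - 1) * (b / 2)) * x ^ (b % 2) := by
      conv_lhs => rw [show b = 2 * (b / 2) + b % 2 from (Nat.div_add_mod b 2).symm]
      rw [pow_add, pow_mul, hx2, ← pow_mul]
    refine ⟨⟨⟨(a + 2 ^ (n - 1) * (b / 2)) % 2 ^ n, Nat.mod_lt _ (by positivity)⟩,
      ⟨b % 2, Nat.mod_lt _ (by norm_num)⟩, ⟨d % 2 ^ m, Nat.mod_lt _ (by positivity)⟩⟩, ?_⟩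
    simp only [hf]
    rw [cmod, hmodh, hxb, pow_add]
    group
  have hcards : Fintype.card (Fin (2 ^ n) × Fin 2 × Fin (2 ^ m)) = Fintype.card P := by
    rw [← Nat.card_eq_fintype_card, ← Nat.card_eq_fintype_card]
    simp only [Nat.card_eq_fintype_card, Fintype.card_prod, Fintype.card_fin]
    rw [← Nat.card_eq_fintype_card, hcard, pow_add, pow_add, pow_one]
    ring
  have hfinj : Function.Injective f :=
    ((Fintype.bijective_iff_surjective_and_card f).mpr ⟨hfsurj, hcards⟩).1
  have key : ∀ (aa dd : ℕ), dd < 2 ^ m → c ^ aa * h ^ dd = 1 → dd = 0 := by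
    intro aa dd hdd heq
    have h1 : f (⟨aa % 2 ^ n, Nat.mod_lt _ (by positivity)⟩, ⟨0, by norm_num⟩, ⟨dd, hdd⟩) =
        f (⟨0, by positivity⟩, ⟨0, by norm_num⟩, ⟨0, by positivity⟩) := by
      simp only [hf]
      rw [cmod]
      simpa using heq
    have h2 := hfinj h1
    simpa using congrArg (fun t => (t.2.2 : ℕ)) h2
  -- the order statement
  refine ⟨⟨e, ge, hval⟩, ?_, ?_⟩
  · intro hord
    have h1 : c ^ e = 1 := by
      have h2 := pow_orderOf_eq_one g
      rw [hord, ge] at h2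
      exact h2
    have hdvd : 2 ^ n ∣ e := by
      rw [← hc]
      exact orderOf_dvd_of_pow_eq_one h1
    rw [hefact] at hdvd
    have hcop : Nat.Coprime (2 ^ n) (s * q) :=
      Nat.Coprime.pow_left _ (Nat.coprime_two_left.mpr hsq_odd)
    have h3 : 2 ^ n ∣ 2 ^ (m - 1) := hcop.dvd_of_dvd_mul_right hdvd
    exact (Nat.pow_dvd_pow_iff_le_right one_lt_two).mp h3
  · intro hnm
    have hg2m : g ^ 2 ^ m = 1 := by
      rw [ge, hefact]
      obtain ⟨t, ht⟩ : 2 ^ n ∣ 2 ^ (m - 1) * (s * q) :=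
        dvd_mul_of_dvd_left (pow_dvd_pow 2 hnm) _
      rw [ht, pow_mul, hcN, one_pow]
    have hg2m1 : ¬ g ^ 2 ^ (m - 1) = 1 := by
      intro hgg
      have e1 : m - 1 = (m - 2) + 1 := by omega
      rw [e1, gpow (m - 2)] at hgg
      have h2 : h ^ 2 ^ ((m - 2) + 1) = (c ^ (s * T (2 ^ (m - 2))))⁻¹ :=
        eq_inv_of_mul_eq_one_left hgg
      have h3 : c ^ (s * T (2 ^ (m - 2))) * h ^ 2 ^ ((m - 2) + 1) = 1 := by
        rw [h2]
        simp
      have hd2 : 2 ^ ((m - 2) + 1) < 2 ^ m := Nat.pow_lt_pow_right one_lt_two (by omega)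
      have h4 := key _ _ hd2 h3
      have h5 : (0:ℕ) < 2 ^ ((m - 2) + 1) := by positivity
      omega
    haveI : Fact (Nat.Prime 2) := ⟨Nat.prime_two⟩
    have e1 : m = (m - 1) + 1 := by omega
    rw [e1]
    exact orderOf_eq_prime_pow hg2m1 (by rw [← e1]; exact hg2m)
end

section
/- Let P = K ⋊ ⟨h⟩ with K dihedral of order 2^{n+1} (n ≥ 2), h of order 2^m, h c h^{-1} = c^j with j ≡ 3 (mod 4) and 2^n | (j^{2^{m-1}} − 1)/(j − 1), and h x h^{-1} = x. Let H_odd = ⟨c^{δ_1}x, c^{γ_1}h⟩ and H_even = ⟨c^{δ_2}x, c^{γ_2}h⟩ be subgroups with commuting generators, where δ_1, γ_1 are odd and δ_2, γ_2 are even, and assume j ≢ −1 (mod 2^n). Then the intersection H_odd ∩ H_even contains no element of order 2^{m-1}; in particular its index in H_odd is greater than 2. -/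
open Subgroup Finset

lemma aux_inv_eq_pow {G} [Group G] [Finite G] (g : G) : g⁻¹ = g ^ (orderOf g - 1) := by
  have h1 : 0 < orderOf g := orderOf_pos g
  have : g * g ^ (orderOf g - 1) = 1 := by
    rw [← pow_succ', Nat.sub_add_cancel h1, pow_orderOf_eq_one]
  exact inv_eq_of_mul_eq_one_right this

/-- Every element of the closure of two commuting elements is `a^ε * b^k`. -/
lemma aux_mem_closure_pair {G} [Group G] [Finite G] {a b : G} (hab : Commute a b) {g : G}
    (hg : g ∈ Subgroup.closure {a, b}) : ∃ ε k : ℕ, g = a ^ ε * b ^ k := by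
  have key : ∀ p q : G, (∃ ε k : ℕ, p = a ^ ε * b ^ k) → (∃ ε k : ℕ, q = a ^ ε * b ^ k) →
      ∃ ε k : ℕ, p * q = a ^ ε * b ^ k := by
    rintro p q ⟨ε, k, rfl⟩ ⟨ε', k', rfl⟩
    refine ⟨ε + ε', k + k', ?_⟩
    rw [pow_add, pow_add]
    exact (hab.symm.pow_pow k ε').mul_mul_mul_comm (a ^ ε) (b ^ k')
  induction hg using Subgroup.closure_induction with
  | mem y hy =>
    rcases hy with rfl | rfl
    · exact ⟨1, 0, by simp⟩
    · exact ⟨0, 1, by simp⟩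
  | one => exact ⟨0, 0, by simp⟩
  | mul p q _ _ hp hq => exact key p q hp hq
  | inv p _ hp =>
    obtain ⟨ε, k, rfl⟩ := hp
    set g := a ^ ε * b ^ k
    have hpow : ∀ t : ℕ, ∃ ε k : ℕ, g ^ t = a ^ ε * b ^ k := by
      intro t
      induction t with
      | zero => exact ⟨0, 0, by simp⟩
      | succ t ih =>
        obtain ⟨ε', k', hh⟩ := ih
        exact key _ _ ⟨ε', k', hh⟩ ⟨ε, k, rfl⟩ |>.imp fun ε'' h => by
          simpa [pow_succ] using h
    rw [aux_inv_eq_pow]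
    exact hpow _

/-- `P = K ⋊ ⟨h⟩` with `K` dihedral of order `2^(n+1)` (`n ≥ 2`),
`h` of order `2^m`, `h c h⁻¹ = c^j` with `j ≡ 3 (mod 4)`,
`2^n ∣ (j^(2^(m-1)) − 1)/(j − 1)`, `h x h⁻¹ = x`, and `j ≢ −1 (mod 2^n)`. If
`H_odd = ⟨c^δ₁ x, c^γ₁ h⟩` and `H_even = ⟨c^δ₂ x, c^γ₂ h⟩` have commuting listed
generators with `δ₁, γ₁` odd and `δ₂, γ₂` even, then `H_odd ∩ H_even` contains no
element of order `2^(m-1)`; in particular its index in `H_odd` exceeds 2. -/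
theorem stmt_14 (n m j : ℕ) (hn : 2 ≤ n) (hj : j % 4 = 3)
    (hdiv : 2 ^ n ∣ ∑ t ∈ Finset.range (2 ^ (m - 1)), j ^ t)
    (hjm1 : ¬ (2 ^ n ∣ j + 1))
    (P : Type*) [Group P] (c x h : P)
    (hc : orderOf c = 2 ^ n) (hx : orderOf x = 2)
    (hxc : x * c * x = c⁻¹)
    (hh : orderOf h = 2 ^ m)
    (hhc : h * c * h⁻¹ = c ^ j)
    (hhx : h * x * h⁻¹ = x)
    (hgen : Subgroup.closure {c, x, h} = (⊤ : Subgroup P))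
    (hcard : Nat.card P = 2 ^ (n + 1 + m))
    (δ₁ γ₁ δ₂ γ₂ : ℕ)
    (hodd : Odd δ₁ ∧ Odd γ₁) (heven : Even δ₂ ∧ Even γ₂)
    (hcomm₁ : (c ^ δ₁ * x) * (c ^ γ₁ * h) = (c ^ γ₁ * h) * (c ^ δ₁ * x))
    (hcomm₂ : (c ^ δ₂ * x) * (c ^ γ₂ * h) = (c ^ γ₂ * h) * (c ^ δ₂ * x)) :
    (∀ g ∈ (Subgroup.closure {c ^ δ₁ * x, c ^ γ₁ * h} ⊓
        Subgroup.closure {c ^ δ₂ * x, c ^ γ₂ * h} : Subgroup P),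
      orderOf g ≠ 2 ^ (m - 1)) ∧
    2 < (Subgroup.closure {c ^ δ₂ * x, c ^ γ₂ * h}).relIndex
        (Subgroup.closure {c ^ δ₁ * x, c ^ γ₁ * h}) := by
  -- ## Basic facts
  have hfin : Finite P := Nat.finite_of_card_ne_zero (by rw [hcard]; positivity)
  have hm : 2 ≤ m := by
    by_contra hm
    have h1 : m - 1 = 0 := by omega
    rw [h1] at hdiv
    simp at hdiv
    have h2 : 2 ^ n ≤ 1 := by omega
    have h3 : 2 ^ 2 ≤ 2 ^ n := Nat.pow_le_pow_right (by norm_num) hn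
    omega
  have hjodd : j % 2 = 1 := by omega
  have hxx : x * x = 1 := by
    have := pow_orderOf_eq_one x; rwa [hx, pow_two] at this
  have hxinv : x⁻¹ = x := inv_eq_of_mul_eq_one_right hxx
  -- conjugation by x
  have hconjx : ∀ a : ℤ, x * c ^ a * x⁻¹ = c ^ (-a) := by
    intro a
    have h1 : x * c * x⁻¹ = c⁻¹ := by rw [hxinv]; exact hxc
    have h2 := map_zpow (MulAut.conj x) c a
    simp only [MulAut.conj_apply] at h2
    rw [h2, h1, inv_zpow, ← zpow_neg]
  -- conjugation by h powers
  have hconjh : ∀ (e : ℕ) (a : ℤ), h ^ e * c ^ a * (h ^ e)⁻¹ = c ^ ((j : ℤ) ^ e * a) := by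
    intro e
    induction e with
    | zero => intro a; simp
    | succ e ih =>
      intro a
      have h2 := map_zpow (MulAut.conj h) c ((j : ℤ) ^ e * a)
      simp only [MulAut.conj_apply] at h2
      calc h ^ (e + 1) * c ^ a * (h ^ (e + 1))⁻¹
          = h * (h ^ e * c ^ a * (h ^ e)⁻¹) * h⁻¹ := by group
        _ = h * c ^ ((j : ℤ) ^ e * a) * h⁻¹ := by rw [ih]
        _ = (h * c * h⁻¹) ^ ((j : ℤ) ^ e * a) := h2
        _ = c ^ ((j : ℤ) ^ (e + 1) * a) := by
            rw [hhc, ← zpow_natCast c j, ← zpow_mul]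
            congr 1
            ring
  -- multiplication forms
  have hhe : ∀ (e : ℕ) (a : ℤ), h ^ e * c ^ a = c ^ ((j : ℤ) ^ e * a) * h ^ e := by
    intro e a
    have := hconjh e a
    rw [← this]; group
  have hxc1 : ∀ a : ℤ, x * c ^ a = c ^ (-a) * x := by
    intro a; rw [← hconjx a]; group
  have hxb : ∀ (b : ℕ) (a : ℤ), x ^ b * c ^ a = c ^ ((-1 : ℤ) ^ b * a) * x ^ b := by
    intro b
    induction b with
    | zero => intro a; simp
    | succ b ih =>
      intro a
      calc x ^ (b + 1) * c ^ a = x ^ b * (x * c ^ a) := by rw [pow_succ, mul_assoc]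
        _ = x ^ b * c ^ (-a) * x := by rw [hxc1, mul_assoc]
        _ = c ^ ((-1 : ℤ) ^ b * (-a)) * x ^ b * x := by rw [ih]
        _ = c ^ ((-1 : ℤ) ^ (b + 1) * a) * x ^ (b + 1) := by
            rw [mul_assoc, ← pow_succ]
            congr 2
            ring
  have hcomxh : Commute x h := by
    have h2 : h * x * h⁻¹ * h = x * h := by rw [hhx]
    have h1 : h * x = x * h := by simpa [mul_assoc] using h2
    exact h1.symm
  -- ## Normal form: surjectivity
  have keymul : ∀ p q : P, (∃ (a : ℤ) (b e : ℕ), p = c ^ a * x ^ b * h ^ e) →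
      (∃ (a : ℤ) (b e : ℕ), q = c ^ a * x ^ b * h ^ e) →
      ∃ (a : ℤ) (b e : ℕ), p * q = c ^ a * x ^ b * h ^ e := by
    rintro p q ⟨a, b, e, rfl⟩ ⟨a', b', e', rfl⟩
    refine ⟨a + (-1 : ℤ) ^ b * ((j : ℤ) ^ e * a'), b + b', e + e', ?_⟩
    calc c ^ a * x ^ b * h ^ e * (c ^ a' * x ^ b' * h ^ e')
        = c ^ a * x ^ b * (h ^ e * c ^ a') * x ^ b' * h ^ e' := by group
      _ = c ^ a * x ^ b * (c ^ ((j : ℤ) ^ e * a') * h ^ e) * x ^ b' * h ^ e' := by rw [hhe]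
      _ = c ^ a * (x ^ b * c ^ ((j : ℤ) ^ e * a')) * (h ^ e * x ^ b') * h ^ e' := by group
      _ = c ^ a * (c ^ ((-1 : ℤ) ^ b * ((j : ℤ) ^ e * a')) * x ^ b) * (x ^ b' * h ^ e) * h ^ e' := by
          rw [hxb, (hcomxh.pow_pow b' e).eq]
      _ = (c ^ a * c ^ ((-1 : ℤ) ^ b * ((j : ℤ) ^ e * a'))) * (x ^ b * x ^ b') * (h ^ e * h ^ e') := by
          group
      _ = c ^ (a + (-1 : ℤ) ^ b * ((j : ℤ) ^ e * a')) * x ^ (b + b') * h ^ (e + e') := by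
          rw [← zpow_add, ← pow_add, ← pow_add]
  have hsurj : ∀ g : P, ∃ (a : ℤ) (b e : ℕ), g = c ^ a * x ^ b * h ^ e := by
    intro g
    have hg : g ∈ Subgroup.closure {c, x, h} := by rw [hgen]; trivial
    induction hg using Subgroup.closure_induction with
    | mem y hy =>
      rcases hy with rfl | rfl | rfl
      · exact ⟨1, 0, 0, by simp⟩
      · exact ⟨0, 1, 0, by simp⟩
      · exact ⟨0, 0, 1, by simp⟩
    | one => exact ⟨0, 0, 0, by simp⟩
    | mul p q _ _ hp hq => exact keymul p q hp hq
    | inv p _ hp =>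
      have hpow : ∀ t : ℕ, ∃ (a : ℤ) (b e : ℕ), p ^ t = c ^ a * x ^ b * h ^ e := by
        intro t
        induction t with
        | zero => exact ⟨0, 0, 0, by simp⟩
        | succ t ih =>
          have := keymul _ _ ih hp
          rwa [← pow_succ] at this
      rw [aux_inv_eq_pow]
      exact hpow _
  -- ## Normal form: uniqueness
  haveI : NeZero (2 ^ n) := ⟨by positivity⟩
  haveI : NeZero (2 ^ m) := ⟨by positivity⟩
  have hcz : ∀ a : ℤ, c ^ ((a : ZMod (2 ^ n)).val : ℕ) = c ^ a := by
    intro a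
    rw [← zpow_natCast c]
    rw [zpow_eq_zpow_iff_modEq, hc]
    have : (((a : ZMod (2 ^ n)).val : ℤ) : ZMod (2 ^ n)) = ((a : ℤ) : ZMod (2 ^ n)) := by
      push_cast
      simp [ZMod.natCast_rightInverse (a : ZMod (2 ^ n))]
    rwa [ZMod.intCast_eq_intCast_iff] at this
  have hxz : ∀ b : ℕ, x ^ ((b : ZMod 2).val : ℕ) = x ^ b := by
    intro b
    rw [ZMod.val_natCast, ← hx, pow_mod_orderOf]
  have hhz : ∀ e : ℕ, h ^ ((e : ZMod (2 ^ m)).val : ℕ) = h ^ e := by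
    intro e
    rw [ZMod.val_natCast, ← hh, pow_mod_orderOf]
  set f : ZMod (2 ^ n) × ZMod 2 × ZMod (2 ^ m) → P :=
    fun p => c ^ (p.1.val : ℕ) * x ^ (p.2.1.val : ℕ) * h ^ (p.2.2.val : ℕ) with hf
  have hfsurj : Function.Surjective f := by
    intro g
    obtain ⟨a, b, e, rfl⟩ := hsurj g
    exact ⟨((a : ZMod (2 ^ n)), (b : ZMod 2), (e : ZMod (2 ^ m))), by
      simp only [hf, hcz, hxz, hhz]⟩
  have hfinj : Function.Injective f := by
    have hbij : Function.Bijective f := by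
      rw [Nat.bijective_iff_surjective_and_card]
      refine ⟨hfsurj, ?_⟩
      rw [Nat.card_prod, Nat.card_prod, Nat.card_zmod, Nat.card_zmod, Nat.card_zmod, hcard]
      ring
    exact hbij.injective
  have huniq : ∀ (a a' : ℤ) (b b' e e' : ℕ), c ^ a * x ^ b * h ^ e = c ^ a' * x ^ b' * h ^ e' →
      a ≡ a' [ZMOD (2 ^ n : ℕ)] ∧ b ≡ b' [MOD 2] ∧ e ≡ e' [MOD 2 ^ m] := by
    intro a a' b b' e e' heq
    have h1 : f ((a : ZMod (2 ^ n)), (b : ZMod 2), (e : ZMod (2 ^ m)))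
        = f ((a' : ZMod (2 ^ n)), (b' : ZMod 2), (e' : ZMod (2 ^ m))) := by
      simp only [hf, hcz, hxz, hhz]
      exact heq
    have h2 := hfinj h1
    rw [Prod.ext_iff, Prod.ext_iff] at h2
    obtain ⟨e1, e2, e3⟩ := h2
    refine ⟨?_, ?_, ?_⟩
    · rwa [ZMod.intCast_eq_intCast_iff] at e1
    · rwa [ZMod.natCast_eq_natCast_iff] at e2
    · rwa [ZMod.natCast_eq_natCast_iff] at e3
  -- ## The geometric sum T
  set T : ℕ → ℕ := fun k => ∑ t ∈ Finset.range k, j ^ t with hT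
  have hT0 : T 0 = 0 := by simp [hT]
  have hTsucc : ∀ k, T (k + 1) = T k + j ^ k := by
    intro k; simp [hT, Finset.sum_range_succ]
  have hTadd : ∀ p q, T (p + q) = T p + j ^ p * T q := by
    intro p q
    induction q with
    | zero => simp [hT0]
    | succ q ih =>
      rw [← add_assoc, hTsucc, ih, hTsucc, pow_add]
      ring
  have hjo : Odd j := Nat.odd_iff.mpr hjodd
  have hTpar : ∀ k, T k % 2 = k % 2 := by
    intro k
    induction k with
    | zero => simp [hT0]
    | succ k ih =>
      have : j ^ k % 2 = 1 := Nat.odd_iff.mp (hjo.pow)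
      rw [hTsucc]
      omega
  have hm1 : m - 1 + 1 = m := by omega
  have hT2m : 2 ^ n ∣ T (2 ^ m) := by
    have h2m : 2 ^ m = 2 ^ (m - 1) + 2 ^ (m - 1) := by
      rw [← two_mul, ← pow_succ', hm1]
    rw [h2m, hTadd]
    exact dvd_add hdiv (Dvd.dvd.mul_left hdiv _)
  have hTq : ∀ q, 2 ^ n ∣ T (2 ^ m * q) := by
    intro q
    induction q with
    | zero => simp [hT0]
    | succ q ih =>
      rw [Nat.mul_succ, hTadd]
      exact dvd_add ih (Dvd.dvd.mul_left hT2m _)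
  have hTmod : ∀ k₁ k₂, k₁ ≡ k₂ [MOD 2 ^ m] → T k₁ ≡ T k₂ [MOD 2 ^ n] := by
    have key : ∀ k, T k ≡ T (k % 2 ^ m) [MOD 2 ^ n] := by
      intro k
      conv_lhs => rw [← Nat.mod_add_div k (2 ^ m)]
      rw [hTadd]
      have h1 : j ^ (k % 2 ^ m) * T (2 ^ m * (k / 2 ^ m)) ≡ 0 [MOD 2 ^ n] :=
        (Nat.modEq_zero_iff_dvd).mpr (Dvd.dvd.mul_left (hTq _) _)
      simpa using (Nat.ModEq.refl (T (k % 2 ^ m))).add h1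
    intro k₁ k₂ hk
    refine (key k₁).trans ?_
    rw [hk]
    exact (key k₂).symm
  have hT2k : ∀ k', ∃ w, T (2 * k') = (j + 1) * w ∧ w % 2 = k' % 2 := by
    intro k'
    induction k' with
    | zero => exact ⟨0, by simp [hT0], by simp⟩
    | succ k' ih =>
      obtain ⟨w, hw, hwp⟩ := ih
      refine ⟨w + j ^ (2 * k'), ?_, ?_⟩
      · have : 2 * (k' + 1) = 2 * k' + 1 + 1 := by ring
        rw [this, hTsucc, hTsucc, hw, pow_succ]
        ring
      · have : j ^ (2 * k') % 2 = 1 := Nat.odd_iff.mp (hjo.pow)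
        omega
  -- ## Subgroup element forms
  have hheN : ∀ e a : ℕ, h ^ e * c ^ a = c ^ (j ^ e * a) * h ^ e := by
    intro e a
    have hcast : ((j ^ e * a : ℕ) : ℤ) = (j : ℤ) ^ e * a := by push_cast; ring
    rw [← zpow_natCast c (j ^ e * a), ← zpow_natCast c a, hcast]
    exact hhe e a
  have husq : ∀ δ : ℕ, (c ^ δ * x) ^ 2 = 1 := by
    intro δ
    rw [pow_two, ← zpow_natCast c δ]
    calc c ^ (δ : ℤ) * x * (c ^ (δ : ℤ) * x) = c ^ (δ : ℤ) * (x * c ^ (δ : ℤ)) * x := by group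
      _ = c ^ (δ : ℤ) * (c ^ (-(δ : ℤ)) * x) * x := by rw [hxc1]
      _ = c ^ (δ : ℤ) * c ^ (-(δ : ℤ)) * (x * x) := by group
      _ = 1 := by rw [← zpow_add, hxx]; simp
  have hured : ∀ (δ ε : ℕ), (c ^ δ * x) ^ ε = (c ^ δ * x) ^ (ε % 2) := by
    intro δ ε
    conv_lhs => rw [← Nat.div_add_mod ε 2]
    rw [pow_add, pow_mul, husq, one_pow, one_mul]
  have hvk : ∀ (γ k : ℕ), (c ^ γ * h) ^ k = c ^ (γ * T k) * h ^ k := by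
    intro γ k
    induction k with
    | zero => simp [hT0]
    | succ k ih =>
      calc (c ^ γ * h) ^ (k + 1) = (c ^ γ * h) ^ k * (c ^ γ * h) := pow_succ _ _
        _ = c ^ (γ * T k) * (h ^ k * c ^ γ) * h := by rw [ih]; group
        _ = c ^ (γ * T k) * (c ^ (j ^ k * γ) * h ^ k) * h := by rw [hheN]
        _ = (c ^ (γ * T k) * c ^ (j ^ k * γ)) * (h ^ k * h) := by group
        _ = c ^ (γ * T (k + 1)) * h ^ (k + 1) := by
            rw [← pow_add, ← pow_succ, hTsucc]
            congr 2
            ring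
  have huv : ∀ (δ γ k : ℕ),
      (c ^ δ * x) * (c ^ γ * h) ^ k = c ^ ((δ : ℤ) - γ * T k) * x * h ^ k := by
    intro δ γ k
    rw [hvk]
    calc c ^ δ * x * (c ^ (γ * T k) * h ^ k)
        = c ^ (δ : ℤ) * (x * c ^ ((γ * T k : ℕ) : ℤ)) * h ^ k := by
          rw [zpow_natCast, zpow_natCast]; group
      _ = c ^ (δ : ℤ) * (c ^ (-((γ * T k : ℕ) : ℤ)) * x) * h ^ k := by rw [hxc1]
      _ = c ^ ((δ : ℤ) - γ * T k) * x * h ^ k := by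
          rw [← mul_assoc, ← zpow_add]
          have hcast : (δ : ℤ) + -((γ * T k : ℕ) : ℤ) = (δ : ℤ) - γ * T k := by
            push_cast; ring
          rw [hcast]
  -- ## Order of c^γ₁ * h
  have hvm : (c ^ γ₁ * h) ^ (2 ^ m) = 1 := by
    rw [hvk]
    have h1 : c ^ (γ₁ * T (2 ^ m)) = 1 :=
      orderOf_dvd_iff_pow_eq_one.mp (by rw [hc]; exact Dvd.dvd.mul_left hT2m _)
    rw [h1, one_mul, ← hh, pow_orderOf_eq_one]
  have hdiv' : 2 ^ n ∣ T (2 ^ (m - 1)) := by simp only [hT]; exact hdiv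
  have hvm1 : (c ^ γ₁ * h) ^ (2 ^ (m - 1)) ≠ 1 := by
    rw [hvk]
    have h1 : c ^ (γ₁ * T (2 ^ (m - 1))) = 1 :=
      orderOf_dvd_iff_pow_eq_one.mp (by rw [hc]; exact Dvd.dvd.mul_left hdiv' _)
    rw [h1, one_mul]
    intro hcon
    have h2 := orderOf_dvd_of_pow_eq_one hcon
    rw [hh] at h2
    have h3 := Nat.le_of_dvd (by positivity) h2
    have h4 : (2:ℕ) ^ (m - 1) < 2 ^ m := Nat.pow_lt_pow_right (by norm_num) (by omega)
    omega
  have hvord : orderOf (c ^ γ₁ * h) = 2 ^ m := by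
    have hdvd : orderOf (c ^ γ₁ * h) ∣ 2 ^ m := orderOf_dvd_of_pow_eq_one hvm
    obtain ⟨i, hi, hieq⟩ := (Nat.dvd_prime_pow Nat.prime_two).mp hdvd
    have him : i = m := by
      by_contra hne
      have hile : i ≤ m - 1 := by omega
      exact hvm1 (orderOf_dvd_iff_pow_eq_one.mp (by rw [hieq]; exact pow_dvd_pow 2 hile))
    rw [hieq, him]
  -- ## Part 1 : no element of order 2^(m-1) in the intersection
  have part1 : ∀ g ∈ (Subgroup.closure {c ^ δ₁ * x, c ^ γ₁ * h} ⊓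
        Subgroup.closure {c ^ δ₂ * x, c ^ γ₂ * h} : Subgroup P),
      orderOf g ≠ 2 ^ (m - 1) := by
    rintro g ⟨hg1, hg2⟩ hord
    obtain ⟨ε₁, k₁, hgo⟩ := aux_mem_closure_pair hcomm₁ hg1
    obtain ⟨ε₂, k₂, hge⟩ := aux_mem_closure_pair hcomm₂ hg2
    rw [hured] at hgo hge
    have hcomm₁' : Commute (c ^ δ₁ * x) (c ^ γ₁ * h) := hcomm₁
    have hγ₁ : γ₁ % 2 = 1 := Nat.odd_iff.mp hodd.2
    have hδ₁ : δ₁ % 2 = 1 := Nat.odd_iff.mp hodd.1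
    have hγ₂ : γ₂ % 2 = 0 := Nat.even_iff.mp heven.2
    have hδ₂ : δ₂ % 2 = 0 := Nat.even_iff.mp heven.1
    -- k₁ is even
    have hk₁even : 2 ∣ k₁ := by
      have h1 : g ^ (2 ^ (m - 1)) = 1 := by rw [← hord]; exact pow_orderOf_eq_one g
      rw [hgo, (hcomm₁'.pow_pow _ _).mul_pow, ← pow_mul, ← pow_mul] at h1
      have h2 : (c ^ δ₁ * x) ^ (ε₁ % 2 * 2 ^ (m - 1)) = 1 := by
        rw [hured]
        have h2m : (2:ℕ) ∣ 2 ^ (m - 1) := dvd_pow_self 2 (by omega)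
        have ht : 2 ∣ ε₁ % 2 * 2 ^ (m - 1) := Dvd.dvd.mul_left h2m _
        have : ε₁ % 2 * 2 ^ (m - 1) % 2 = 0 := by omega
        rw [this, pow_zero]
      rw [h2, one_mul] at h1
      have h3 := orderOf_dvd_of_pow_eq_one h1
      rw [hvord] at h3
      have h5 : (2:ℕ) ^ (m - 1) * 2 = 2 ^ m := by rw [← pow_succ, hm1]
      have h4 : 2 ^ (m - 1) * 2 ∣ 2 ^ (m - 1) * k₁ := by
        rw [h5]; rwa [mul_comm] at h3
      exact (Nat.mul_dvd_mul_iff_left (by positivity : 0 < (2:ℕ) ^ (m - 1))).mp h4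
    rcases Nat.mod_two_eq_zero_or_one ε₁ with hε₁ | hε₁ <;>
      rcases Nat.mod_two_eq_zero_or_one ε₂ with hε₂ | hε₂ <;>
      rw [hε₁] at hgo <;> rw [hε₂] at hge
    · -- both x-free
      rw [pow_zero, one_mul] at hgo hge
      have heq : c ^ ((γ₁ * T k₁ : ℕ) : ℤ) * x ^ 0 * h ^ k₁
          = c ^ ((γ₂ * T k₂ : ℕ) : ℤ) * x ^ 0 * h ^ k₂ := by
        simp only [pow_zero, mul_one, zpow_natCast]
        rw [← hvk, ← hvk, ← hgo, ← hge]
      obtain ⟨hA, _, hk⟩ := huniq _ _ _ _ _ _ heq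
      -- k₁ = 2k' with k' odd
      have h4 : ¬ (4 ∣ k₁) := by
        rintro ⟨t, rfl⟩
        have h22 : (2:ℕ) ^ 2 * 2 ^ (m - 2) = 2 ^ m := by rw [← pow_add]; congr 1; omega
        have hgm : g ^ (2 ^ (m - 2)) = 1 := by
          rw [hgo, ← pow_mul]
          have : 4 * t * 2 ^ (m - 2) = 2 ^ m * t := by
            calc 4 * t * 2 ^ (m - 2) = t * (2 ^ 2 * 2 ^ (m - 2)) := by ring
              _ = t * 2 ^ m := by rw [h22]
              _ = 2 ^ m * t := by ring
          rw [this, pow_mul, hvm, one_pow]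
        have hdvd := orderOf_dvd_of_pow_eq_one hgm
        rw [hord] at hdvd
        have h6 := Nat.le_of_dvd (by positivity) hdvd
        have h7 : (2:ℕ) ^ (m - 2) < 2 ^ (m - 1) := Nat.pow_lt_pow_right (by norm_num) (by omega)
        omega
      obtain ⟨k', hk', hk'odd⟩ : ∃ k', k₁ = 2 * k' ∧ k' % 2 = 1 :=
        ⟨k₁ / 2, by omega, by omega⟩
      -- congruences
      have hA' : γ₁ * T k₁ ≡ γ₂ * T k₂ [MOD 2 ^ n] := Int.natCast_modEq_iff.mp hA
      have hTk : T k₂ ≡ T k₁ [MOD 2 ^ n] := hTmod _ _ hk.symm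
      have h6 : γ₁ * T k₁ ≡ γ₂ * T k₁ [MOD 2 ^ n] := hA'.trans (hTk.mul_left γ₂)
      have h8 := h6.dvd
      have h9 : ((2 ^ n : ℕ) : ℤ) ∣ ((γ₂ : ℤ) - γ₁) * T k₁ := by
        have hcast : ((γ₂ * T k₁ : ℕ) : ℤ) - ((γ₁ * T k₁ : ℕ) : ℤ)
            = ((γ₂ : ℤ) - γ₁) * T k₁ := by push_cast; ring
        rwa [hcast] at h8
      obtain ⟨w, hw, hwp⟩ := hT2k k'
      rw [hk', hw] at h9
      have h10 : ((2 ^ n : ℕ) : ℤ) ∣ ((j : ℤ) + 1) * (((γ₂ : ℤ) - γ₁) * w) := by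
        have : ((j : ℤ) + 1) * (((γ₂ : ℤ) - γ₁) * w) = ((γ₂ : ℤ) - γ₁) * ((j + 1) * w : ℕ) := by
          push_cast; ring
        rw [this]; exact h9
      have hcop : IsCoprime ((2 ^ n : ℕ) : ℤ) (((γ₂ : ℤ) - γ₁) * w) := by
        have : ((2 ^ n : ℕ) : ℤ) = (2 : ℤ) ^ n := by push_cast; ring
        rw [this]
        refine IsCoprime.pow_left ?_
        rw [Int.prime_two.coprime_iff_not_dvd]
        intro hdvd2
        have ho1 : Odd ((γ₂ : ℤ) - γ₁) := by rw [Int.odd_iff]; omega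
        have ho2 : Odd ((w : ℕ) : ℤ) := by rw [Int.odd_iff]; omega
        have ho : Odd (((γ₂ : ℤ) - γ₁) * w) := Int.odd_mul.mpr ⟨ho1, ho2⟩
        rw [Int.odd_iff] at ho
        omega
      have hfinal := hcop.dvd_of_dvd_mul_right h10
      have : (2 : ℕ) ^ n ∣ j + 1 := by
        have hcast : ((j + 1 : ℕ) : ℤ) = (j : ℤ) + 1 := by push_cast; ring
        rw [← Int.natCast_dvd_natCast, hcast]
        exact hfinal
      exact hjm1 this
    · -- x-free vs x-ful : parity contradiction
      rw [pow_zero, one_mul] at hgo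
      rw [pow_one] at hge
      have heq : c ^ ((γ₁ * T k₁ : ℕ) : ℤ) * x ^ 0 * h ^ k₁
          = c ^ ((δ₂ : ℤ) - γ₂ * T k₂) * x ^ 1 * h ^ k₂ := by
        simp only [pow_zero, mul_one, pow_one, zpow_natCast]
        rw [← hvk, ← huv, ← hgo, ← hge]
      obtain ⟨_, hb, _⟩ := huniq _ _ _ _ _ _ heq
      have hb' : 0 % 2 = 1 % 2 := hb
      omega
    · -- x-ful vs x-free : parity contradiction
      rw [pow_zero, one_mul] at hge
      rw [pow_one] at hgo
      have heq : c ^ ((δ₁ : ℤ) - γ₁ * T k₁) * x ^ 1 * h ^ k₁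
          = c ^ ((γ₂ * T k₂ : ℕ) : ℤ) * x ^ 0 * h ^ k₂ := by
        simp only [pow_zero, mul_one, pow_one, zpow_natCast]
        rw [← huv, ← hvk, ← hgo, ← hge]
      obtain ⟨_, hb, _⟩ := huniq _ _ _ _ _ _ heq
      have hb' : 1 % 2 = 0 % 2 := hb
      omega
    · -- both have x : parity contradiction on the c-exponent
      rw [pow_one] at hgo hge
      have heq : c ^ ((δ₁ : ℤ) - γ₁ * T k₁) * x ^ 1 * h ^ k₁
          = c ^ ((δ₂ : ℤ) - γ₂ * T k₂) * x ^ 1 * h ^ k₂ := by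
        simp only [pow_one]
        rw [← huv, ← huv, ← hgo, ← hge]
      obtain ⟨hA, _, _⟩ := huniq _ _ _ _ _ _ heq
      have h2n : (2 : ℤ) ∣ ((2 ^ n : ℕ) : ℤ) := by
        have : ((2 ^ n : ℕ) : ℤ) = (2:ℤ) ^ n := by push_cast; ring
        rw [this]; exact dvd_pow_self 2 (by omega)
      have hA2 : ((δ₁ : ℤ) - γ₁ * T k₁) % 2 = ((δ₂ : ℤ) - γ₂ * T k₂) % 2 := hA.of_dvd h2n
      have hT1 : T k₁ % 2 = 0 := by rw [hTpar]; omega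
      have e1 : ((γ₁ : ℤ) * T k₁) % 2 = 0 := by
        rw [Int.mul_emod]
        have : ((T k₁ : ℕ) : ℤ) % 2 = 0 := by omega
        rw [this]; simp
      have e2 : ((γ₂ : ℤ) * T k₂) % 2 = 0 := by
        rw [Int.mul_emod]
        have : ((γ₂ : ℕ) : ℤ) % 2 = 0 := by omega
        rw [this]; simp
      have a1 : ((γ₁ : ℤ) * T k₁) = ((γ₁ : ℤ) * T k₁) := rfl
      set p := (γ₁ : ℤ) * T k₁ with hp
      set q := (γ₂ : ℤ) * T k₂ with hq
      omega
  refine ⟨part1, ?_⟩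
  by_contra hle
  push_neg at hle
  set Hodd := Subgroup.closure {c ^ δ₁ * x, c ^ γ₁ * h} with hHodd
  set He := Subgroup.closure {c ^ δ₂ * x, c ^ γ₂ * h} with hHe
  set J := He.subgroupOf Hodd with hJ
  have hrel : He.relIndex Hodd = J.index := rfl
  have hne0 : J.index ≠ 0 := Subgroup.index_ne_zero_of_finite
  have hvmem : (c ^ γ₁ * h) ∈ Hodd :=
    Subgroup.subset_closure (by simp)
  have hsqmem : (c ^ γ₁ * h) ^ 2 ∈ He := by
    have h12 : J.index = 1 ∨ J.index = 2 := by
      rw [hrel] at hle; omega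
    rcases h12 with h1 | h2
    · have : J = ⊤ := Subgroup.index_eq_one.mp h1
      have hmem : (⟨(c ^ γ₁ * h), hvmem⟩ : Hodd) ^ 2 ∈ J := by rw [this]; trivial
      rw [hJ, Subgroup.mem_subgroupOf] at hmem
      exact hmem
    · have hmem := Subgroup.sq_mem_of_index_two h2 (⟨(c ^ γ₁ * h), hvmem⟩ : Hodd)
      rw [hJ, Subgroup.mem_subgroupOf] at hmem
      exact hmem
  have hordsq : orderOf ((c ^ γ₁ * h) ^ 2) = 2 ^ (m - 1) := by
    rw [orderOf_pow, hvord]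
    have hgcd : Nat.gcd (2 ^ m) 2 = 2 := by
      have : (2:ℕ) ∣ 2 ^ m := dvd_pow_self 2 (by omega)
      exact Nat.gcd_eq_right this
    have hdivq : 2 ^ m / 2 = 2 ^ (m - 1) := by
      conv_lhs => rw [← hm1, pow_succ, Nat.mul_div_cancel _ (by norm_num : 0 < 2)]
    rw [hgcd, hdivq]
  exact part1 _ ⟨Subgroup.pow_mem _ hvmem 2, hsqmem⟩ hordsq
end

section
/- Let P = K ⋊ ⟨h⟩ with K dihedral of order 2^{n+1} (n ≥ 2), h of order 2^m, h c h^{-1} = c^j with j odd, h x h^{-1} = c^k x with k odd, and suppose 2^n | j^{2^{m-1}} − 1 and 2^n | k(1 + j + ⋯ + j^{2^{m-1}−1}). Then the centralizer of H = ⟨h⟩ in P equals {c^a h^b : a(j−1) ≡ 0 (mod 2^n)}, and hence the conjugacy class of H in P has size 2^{n+1}/gcd(j−1, 2^n). -/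
/-- `P = K ⋊ ⟨h⟩` with `K` dihedral of order `2^(n+1)` (`n ≥ 2`),
`h` of order `2^m`, `h c h⁻¹ = c^j` (`j` odd), `h x h⁻¹ = c^k x` (`k` odd), and
`h^(2^(m-1))` centralising `K`. Then the centraliser of `H = ⟨h⟩` in `P` is
`{c^a h^b : 2^n ∣ a(j−1)}`, and the conjugacy class of `H` (= index of its
normaliser) has size `2^(n+1)/gcd(j−1, 2^n)`. -/
theorem stmt_15 (n m j k : ℕ) (hn : 2 ≤ n) (hj : Odd j) (hk : Odd k)
    (hact1 : 2 ^ n ∣ j ^ 2 ^ (m - 1) - 1)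
    (hact2 : 2 ^ n ∣ k * ∑ t ∈ Finset.range (2 ^ (m - 1)), j ^ t)
    (P : Type*) [Group P] (c x h : P)
    (hc : orderOf c = 2 ^ n) (hx : orderOf x = 2)
    (hxc : x * c * x = c⁻¹)
    (hh : orderOf h = 2 ^ m)
    (hhc : h * c * h⁻¹ = c ^ j)
    (hhx : h * x * h⁻¹ = c ^ k * x)
    (hgen : Subgroup.closure {c, x, h} = (⊤ : Subgroup P))
    (hcard : Nat.card P = 2 ^ (n + 1 + m)) :
    (∀ g : P, g ∈ Subgroup.centralizer ((Subgroup.zpowers h : Subgroup P) : Set P) ↔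
      ∃ a b : ℕ, g = c ^ a * h ^ b ∧ 2 ^ n ∣ a * (j - 1)) ∧
    (Subgroup.normalizer ((Subgroup.zpowers h : Subgroup P) : Set P)).index
      = 2 ^ (n + 1) / Nat.gcd (j - 1) (2 ^ n) := by
  classical
  haveI : NeZero (2 ^ n) := ⟨pow_ne_zero _ two_ne_zero⟩
  haveI : NeZero (2 ^ m) := ⟨pow_ne_zero _ two_ne_zero⟩
  have hj1 : 1 ≤ j := hj.pos
  have hxx : x * x = 1 := by
    have := pow_orderOf_eq_one x; rwa [hx, pow_two] at this
  have hxinv : x⁻¹ = x := inv_eq_of_mul_eq_one_left hxx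
  have hc2n : c ^ (2 ^ n) = 1 := by rw [← hc]; exact pow_orderOf_eq_one c
  have hh2m : h ^ (2 ^ m) = 1 := by rw [← hh]; exact pow_orderOf_eq_one h
  -- conjugation lemmas
  have hxc' : ∀ a : ℤ, x * c ^ a * x = c ^ (-a) := by
    intro a
    have h1 : x * c * x⁻¹ = c⁻¹ := by rw [hxinv]; exact hxc
    calc x * c ^ a * x = x * c ^ a * x⁻¹ := by rw [hxinv]
      _ = (x * c * x⁻¹) ^ a := conj_zpow.symm
      _ = c ^ (-a) := by rw [h1, inv_zpow, ← zpow_neg]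
  have hxc1 : ∀ a : ℤ, x * c ^ a = c ^ (-a) * x := by
    intro a
    have := hxc' a
    calc x * c ^ a = x * c ^ a * (x * x) := by rw [hxx, mul_one]
      _ = (x * c ^ a * x) * x := by group
      _ = c ^ (-a) * x := by rw [this]
  have hhc' : ∀ a : ℤ, h * c ^ a * h⁻¹ = c ^ (a * j) := by
    intro a
    calc h * c ^ a * h⁻¹ = (h * c * h⁻¹) ^ a := conj_zpow.symm
      _ = (c ^ (j : ℤ)) ^ a := by rw [hhc, zpow_natCast]
      _ = c ^ (a * j) := by rw [← zpow_mul, mul_comm]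
  have hhc1 : ∀ a : ℤ, h * c ^ a = c ^ (a * j) * h := by
    intro a
    have := hhc' a
    rw [mul_inv_eq_iff_eq_mul] at this
    exact this
  have hhx1 : h * x = c ^ (k : ℤ) * x * h := by
    have := hhx
    rw [mul_inv_eq_iff_eq_mul] at this
    rw [this, zpow_natCast]
  have hxh : x * h * x = c ^ (-(k : ℤ)) * h := by
    calc x * h * x = x * (h * x) := by rw [mul_assoc]
      _ = x * (c ^ (k : ℤ) * x * h) := by rw [hhx1]
      _ = (x * c ^ (k : ℤ) * x) * h := by group
      _ = c ^ (-(k : ℤ)) * h := by rw [hxc' (k : ℤ)]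
  -- powers of h acting on c and x
  have hbc : ∀ (b : ℕ) (a : ℤ), h ^ b * c ^ a = c ^ (a * ((j ^ b : ℕ) : ℤ)) * h ^ b := by
    intro b
    induction b with
    | zero => intro a; simp
    | succ b ih =>
      intro a
      calc h ^ (b + 1) * c ^ a = h ^ b * (h * c ^ a) := by rw [pow_succ, mul_assoc]
        _ = h ^ b * (c ^ (a * j) * h) := by rw [hhc1]
        _ = (h ^ b * c ^ (a * j)) * h := by rw [mul_assoc]
        _ = c ^ (a * j * ((j ^ b : ℕ) : ℤ)) * h ^ b * h := by rw [ih]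
        _ = c ^ (a * ((j ^ (b + 1) : ℕ) : ℤ)) * h ^ (b + 1) := by
            rw [mul_assoc, ← pow_succ]
            congr 2
            push_cast
            ring
  have hbx : ∀ b : ℕ,
      h ^ b * x = c ^ ((k * ∑ t ∈ Finset.range b, j ^ t : ℕ) : ℤ) * x * h ^ b := by
    intro b
    induction b with
    | zero => simp
    | succ b ih =>
      calc h ^ (b + 1) * x = h * (h ^ b * x) := by rw [pow_succ']; rw [mul_assoc]
        _ = h * (c ^ ((k * ∑ t ∈ Finset.range b, j ^ t : ℕ) : ℤ) * x * h ^ b) := by rw [ih]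
        _ = (h * c ^ ((k * ∑ t ∈ Finset.range b, j ^ t : ℕ) : ℤ)) * x * h ^ b := by group
        _ = c ^ (((k * ∑ t ∈ Finset.range b, j ^ t : ℕ) : ℤ) * j) * h * x * h ^ b := by
            rw [hhc1]
        _ = c ^ (((k * ∑ t ∈ Finset.range b, j ^ t : ℕ) : ℤ) * j)
              * (c ^ (k : ℤ) * x * h) * h ^ b := by rw [mul_assoc _ h x, hhx1]
        _ = c ^ ((k * ∑ t ∈ Finset.range (b + 1), j ^ t : ℕ) : ℤ) * x * h ^ (b + 1) := by
            rw [geom_sum_succ]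
            have : ((k * ((j * ∑ t ∈ Finset.range b, j ^ t) + 1) : ℕ) : ℤ)
                = ((k * ∑ t ∈ Finset.range b, j ^ t : ℕ) : ℤ) * j + k := by push_cast; ring
            rw [this, zpow_add, pow_succ]
            group
  -- every element has a normal form
  have hS : ∀ g : P, ∃ (a : ℤ) (b : ℕ), g = c ^ a * h ^ b ∨ g = c ^ a * x * h ^ b := by
    have key : ∀ g ∈ Subgroup.closure ({c, x, h} : Set P),
        ∃ (a : ℤ) (b : ℕ), g = c ^ a * h ^ b ∨ g = c ^ a * x * h ^ b := by
      intro g hg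
      induction hg using Subgroup.closure_induction with
      | mem y hy =>
        rcases hy with rfl | rfl | rfl
        · exact ⟨1, 0, Or.inl (by simp)⟩
        · exact ⟨0, 0, Or.inr (by simp)⟩
        · exact ⟨0, 1, Or.inl (by simp)⟩
      | one => exact ⟨0, 0, Or.inl (by simp)⟩
      | mul y z hy hz ihy ihz =>
        obtain ⟨a, b, hy1 | hy1⟩ := ihy <;> obtain ⟨a', b', hz1 | hz1⟩ := ihz
        · refine ⟨a + a' * ((j ^ b : ℕ) : ℤ), b + b', Or.inl ?_⟩
          rw [hy1, hz1]
          calc c ^ a * h ^ b * (c ^ a' * h ^ b')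
              = c ^ a * (h ^ b * c ^ a') * h ^ b' := by group
            _ = c ^ a * (c ^ (a' * ((j ^ b : ℕ) : ℤ)) * h ^ b) * h ^ b' := by rw [hbc]
            _ = c ^ (a + a' * ((j ^ b : ℕ) : ℤ)) * h ^ (b + b') := by
                rw [zpow_add, pow_add]; group
        · refine ⟨a + a' * ((j ^ b : ℕ) : ℤ)
            + ((k * ∑ t ∈ Finset.range b, j ^ t : ℕ) : ℤ), b + b', Or.inr ?_⟩
          rw [hy1, hz1]
          calc c ^ a * h ^ b * (c ^ a' * x * h ^ b')
              = c ^ a * (h ^ b * c ^ a') * x * h ^ b' := by group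
            _ = c ^ a * (c ^ (a' * ((j ^ b : ℕ) : ℤ)) * h ^ b) * x * h ^ b' := by rw [hbc]
            _ = c ^ (a + a' * ((j ^ b : ℕ) : ℤ)) * (h ^ b * x) * h ^ b' := by
                rw [zpow_add]; group
            _ = c ^ (a + a' * ((j ^ b : ℕ) : ℤ))
                * (c ^ ((k * ∑ t ∈ Finset.range b, j ^ t : ℕ) : ℤ) * x * h ^ b) * h ^ b' := by
                rw [hbx]
            _ = _ := by rw [zpow_add, zpow_add, pow_add]; group
        · refine ⟨a + (- a') * ((j ^ b : ℕ) : ℤ), b + b', Or.inr ?_⟩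
          rw [hy1, hz1]
          calc c ^ a * x * h ^ b * (c ^ a' * h ^ b')
              = c ^ a * x * (h ^ b * c ^ a') * h ^ b' := by group
            _ = c ^ a * x * (c ^ (a' * ((j ^ b : ℕ) : ℤ)) * h ^ b) * h ^ b' := by rw [hbc]
            _ = c ^ a * (x * c ^ (a' * ((j ^ b : ℕ) : ℤ))) * h ^ b * h ^ b' := by group
            _ = c ^ a * (c ^ (-(a' * ((j ^ b : ℕ) : ℤ))) * x) * h ^ b * h ^ b' := by rw [hxc1]
            _ = _ := by rw [zpow_add, pow_add, neg_mul]; group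
        · refine ⟨a + (-(a' * ((j ^ b : ℕ) : ℤ))
            + (-((k * ∑ t ∈ Finset.range b, j ^ t : ℕ) : ℤ))), b + b', Or.inl ?_⟩
          rw [hy1, hz1]
          calc c ^ a * x * h ^ b * (c ^ a' * x * h ^ b')
              = c ^ a * x * (h ^ b * c ^ a') * x * h ^ b' := by group
            _ = c ^ a * x * (c ^ (a' * ((j ^ b : ℕ) : ℤ)) * h ^ b) * x * h ^ b' := by rw [hbc]
            _ = c ^ a * x * c ^ (a' * ((j ^ b : ℕ) : ℤ)) * (h ^ b * x) * h ^ b' := by group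
            _ = c ^ a * x * c ^ (a' * ((j ^ b : ℕ) : ℤ))
                * (c ^ ((k * ∑ t ∈ Finset.range b, j ^ t : ℕ) : ℤ) * x * h ^ b) * h ^ b' := by
                rw [hbx]
            _ = c ^ a * (x * c ^ (a' * ((j ^ b : ℕ) : ℤ)
                  + ((k * ∑ t ∈ Finset.range b, j ^ t : ℕ) : ℤ)) * x) * h ^ b * h ^ b' := by
                rw [zpow_add]; group
            _ = c ^ a * c ^ (-(a' * ((j ^ b : ℕ) : ℤ)
                  + ((k * ∑ t ∈ Finset.range b, j ^ t : ℕ) : ℤ))) * h ^ b * h ^ b' := by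
                rw [hxc']
            _ = _ := by rw [zpow_add, zpow_add, pow_add, neg_add]; group
      | inv y hy ihy =>
        obtain ⟨a, b, hy1 | hy1⟩ := ihy
        all_goals {
          have hinvb : (h ^ b)⁻¹ = h ^ ((2 ^ m - 1) * b) := by
            rw [inv_eq_iff_mul_eq_one, ← pow_add]
            have h1 : 1 ≤ 2 ^ m := Nat.one_le_two_pow
            have : b + (2 ^ m - 1) * b = 2 ^ m * b := by
              cases' Nat.exists_eq_add_of_le h1 with t ht
              rw [ht, Nat.add_sub_cancel_left]; ring
            rw [this, pow_mul, hh2m, one_pow]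
          first
          | · refine ⟨(-a) * ((j ^ ((2 ^ m - 1) * b) : ℕ) : ℤ), (2 ^ m - 1) * b, Or.inl ?_⟩
              rw [hy1]
              calc (c ^ a * h ^ b)⁻¹ = (h ^ b)⁻¹ * c ^ (-a) := by
                    rw [mul_inv_rev, zpow_neg]
                _ = h ^ ((2 ^ m - 1) * b) * c ^ (-a) := by rw [hinvb]
                _ = _ := by rw [hbc]
          | · refine ⟨a * ((j ^ ((2 ^ m - 1) * b) : ℕ) : ℤ)
                + ((k * ∑ t ∈ Finset.range ((2 ^ m - 1) * b), j ^ t : ℕ) : ℤ),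
                (2 ^ m - 1) * b, Or.inr ?_⟩
              rw [hy1]
              calc (c ^ a * x * h ^ b)⁻¹ = (h ^ b)⁻¹ * (x⁻¹ * c ^ (-a)) := by
                    group
                _ = h ^ ((2 ^ m - 1) * b) * (x * c ^ (-a)) := by rw [hinvb, hxinv]
                _ = h ^ ((2 ^ m - 1) * b) * (c ^ a * x) := by rw [hxc1, neg_neg]
                _ = (h ^ ((2 ^ m - 1) * b) * c ^ a) * x := by group
                _ = c ^ (a * ((j ^ ((2 ^ m - 1) * b) : ℕ) : ℤ))
                      * (h ^ ((2 ^ m - 1) * b) * x) := by rw [hbc]; group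
                _ = c ^ (a * ((j ^ ((2 ^ m - 1) * b) : ℕ) : ℤ))
                      * (c ^ ((k * ∑ t ∈ Finset.range ((2 ^ m - 1) * b), j ^ t : ℕ) : ℤ)
                        * x * h ^ ((2 ^ m - 1) * b)) := by rw [hbx]
                _ = _ := by rw [zpow_add]; group
        }
    intro g
    exact key g (by rw [hgen]; trivial)
  have hFin : Finite P := by
    have : 0 < Nat.card P := by rw [hcard]; positivity
    exact (Nat.card_pos_iff.mp this).2
  haveI : Fact (1 < 2) := ⟨one_lt_two⟩
  -- the normal form map
  set f : ZMod (2 ^ n) × ZMod 2 × ZMod (2 ^ m) → P :=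
    fun t => c ^ t.1.val * x ^ t.2.1.val * h ^ t.2.2.val with hf
  -- reduction lemmas
  have hcz : ∀ a : ℤ, c ^ (((a : ZMod (2 ^ n)).val : ℕ) : ℤ) = c ^ a := by
    intro a
    have h1 : (((a : ZMod (2 ^ n)).val : ℕ) : ℤ) = a % ((orderOf c : ℕ) : ℤ) := by
      rw [ZMod.val_intCast, hc]
    rw [h1, zpow_mod_orderOf]
  have hczn : ∀ a : ℤ, c ^ (((a : ZMod (2 ^ n)).val : ℕ)) = c ^ a := by
    intro a; rw [← hcz a, zpow_natCast]
  have hhzn : ∀ b : ℕ, h ^ ((b : ZMod (2 ^ m)).val) = h ^ b := by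
    intro b
    rw [ZMod.val_natCast, ← hh, pow_mod_orderOf]
  have hhzz : ∀ w : ℤ, h ^ (((w : ZMod (2 ^ m)).val : ℕ) : ℤ) = h ^ w := by
    intro w
    have h1 : (((w : ZMod (2 ^ m)).val : ℕ) : ℤ) = w % ((orderOf h : ℕ) : ℤ) := by
      rw [ZMod.val_intCast, hh]
    rw [h1, zpow_mod_orderOf]
  have hf1 : ∀ (a : ℤ) (b : ℕ),
      f ((a : ZMod (2 ^ n)), 0, (b : ZMod (2 ^ m))) = c ^ a * h ^ b := by
    intro a b
    show c ^ ((a : ZMod (2 ^ n)).val) * x ^ ((0 : ZMod 2).val)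
        * h ^ ((b : ZMod (2 ^ m)).val) = c ^ a * h ^ b
    rw [hczn, hhzn]
    simp
  have hf2 : ∀ (a : ℤ) (b : ℕ),
      f ((a : ZMod (2 ^ n)), 1, (b : ZMod (2 ^ m))) = c ^ a * x * h ^ b := by
    intro a b
    show c ^ ((a : ZMod (2 ^ n)).val) * x ^ ((1 : ZMod 2).val)
        * h ^ ((b : ZMod (2 ^ m)).val) = c ^ a * x * h ^ b
    rw [hczn, hhzn]
    simp [ZMod.val_one]
  have hf3 : ∀ w : ℤ, f (0, 0, ((w : ZMod (2 ^ m)))) = h ^ w := by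
    intro w
    show c ^ ((0 : ZMod (2 ^ n)).val) * x ^ ((0 : ZMod 2).val)
        * h ^ ((w : ZMod (2 ^ m)).val) = h ^ w
    rw [← zpow_natCast h ((w : ZMod (2 ^ m)).val), hhzz]
    simp
  -- surjectivity of f
  have hsurj : Function.Surjective f := by
    intro g
    obtain ⟨a, b, hg | hg⟩ := hS g
    · exact ⟨((a : ZMod (2 ^ n)), 0, (b : ZMod (2 ^ m))), by rw [hf1, hg]⟩
    · exact ⟨((a : ZMod (2 ^ n)), 1, (b : ZMod (2 ^ m))), by rw [hf2, hg]⟩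
  have hfcard : Nat.card (ZMod (2 ^ n) × ZMod 2 × ZMod (2 ^ m)) = Nat.card P := by
    rw [Nat.card_prod, Nat.card_prod, Nat.card_zmod, Nat.card_zmod, Nat.card_zmod, hcard]
    ring
  have hbij : Function.Bijective f :=
    (Nat.bijective_iff_surjective_and_card f).mpr ⟨hsurj, hfcard⟩
  -- separation lemmas
  have hsep : ∀ (s : ℤ) (b : ℕ) (w : ℤ), c ^ s * h ^ b = h ^ w → c ^ s = 1 := by
    intro s b w hsw
    have h1 : f ((s : ZMod (2 ^ n)), 0, (b : ZMod (2 ^ m)))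
        = f (0, 0, ((w : ZMod (2 ^ m)))) := by rw [hf1, hf3, hsw]
    have h2 := hbij.injective h1
    have h3 : (s : ZMod (2 ^ n)) = 0 := congrArg Prod.fst h2
    have h4 : ((2 ^ n : ℕ) : ℤ) ∣ s := (ZMod.intCast_zmod_eq_zero_iff_dvd s (2 ^ n)).mp h3
    obtain ⟨t, rfl⟩ := h4
    rw [zpow_mul, zpow_natCast, hc2n, one_zpow]
  have hsepx : ∀ (s : ℤ) (b : ℕ) (w : ℤ), c ^ s * x * h ^ b ≠ h ^ w := by
    intro s b w hsw
    have h1 : f ((s : ZMod (2 ^ n)), 1, (b : ZMod (2 ^ m)))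
        = f (0, 0, ((w : ZMod (2 ^ m)))) := by rw [hf2, hf3, hsw]
    have h2 := hbij.injective h1
    have h3 : (1 : ZMod 2) = 0 := congrArg (fun t => t.2.1) h2
    exact one_ne_zero h3
  -- parity obstruction
  have hparity : ∀ a : ℤ, ¬ ((2 ^ n : ℕ) : ℤ) ∣ (a * ((j : ℤ) - 1) + k) := by
    intro a hdvd
    obtain ⟨u, hu⟩ := hj
    obtain ⟨v, hv⟩ := hk
    have h2 : (2 : ℤ) ∣ ((2 ^ n : ℕ) : ℤ) := by
      have he : ((2 ^ n : ℕ) : ℤ) = (2 : ℤ) ^ n := by push_cast; ring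
      rw [he]
      exact dvd_pow_self 2 (by omega)
    obtain ⟨t, ht⟩ := dvd_trans h2 hdvd
    have hj2 : (j : ℤ) = 2 * u + 1 := by exact_mod_cast congrArg (Nat.cast : ℕ → ℤ) hu
    have hk2 : (k : ℤ) = 2 * v + 1 := by exact_mod_cast congrArg (Nat.cast : ℕ → ℤ) hv
    rw [hj2, hk2] at ht
    have h4 : 2 * (a * u + v) + 1 = 2 * t := by linear_combination ht
    omega
  -- sufficient condition for centralizer membership
  have hcent_of : ∀ (a : ℤ) (b : ℕ), c ^ (a * ((j : ℤ) - 1)) = 1 →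
      c ^ a * h ^ b ∈ Subgroup.centralizer ((Subgroup.zpowers h : Subgroup P) : Set P) := by
    intro a b hone
    have h1 : c ^ (a * (j : ℤ)) = c ^ a := by
      have e : a * (j : ℤ) = a + a * ((j : ℤ) - 1) := by ring
      rw [e, zpow_add, hone, mul_one]
    have hcomm : h * (c ^ a * h ^ b) = (c ^ a * h ^ b) * h := by
      calc h * (c ^ a * h ^ b) = (h * c ^ a) * h ^ b := by rw [mul_assoc]
        _ = c ^ (a * (j : ℤ)) * h * h ^ b := by rw [hhc1]
        _ = c ^ a * (h * h ^ b) := by rw [h1, mul_assoc]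
        _ = c ^ a * (h ^ b * h) := by rw [← pow_succ', pow_succ]
        _ = (c ^ a * h ^ b) * h := by rw [mul_assoc]
    rw [Subgroup.mem_centralizer_iff]
    intro s hs
    obtain ⟨z, hz⟩ := Subgroup.mem_zpowers_iff.mp (SetLike.mem_coe.mp hs)
    rw [← hz]
    exact ((Commute.symm hcomm).zpow_right z).symm
  -- the centralizer characterization
  have hCiff : ∀ g : P,
      g ∈ Subgroup.centralizer ((Subgroup.zpowers h : Subgroup P) : Set P) ↔
      ∃ a b : ℕ, g = c ^ a * h ^ b ∧ 2 ^ n ∣ a * (j - 1) := by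
    intro g
    constructor
    · intro hg
      have hcom : h * g = g * h :=
        Subgroup.mem_centralizer_iff.mp hg h (SetLike.mem_coe.mpr (Subgroup.mem_zpowers h))
      obtain ⟨a, b, hg1 | hg1⟩ := hS g
      · -- g = c^a h^b
        have e1 : c ^ (a * (j : ℤ)) * h ^ (b + 1) = c ^ a * h ^ (b + 1) := by
          calc c ^ (a * (j : ℤ)) * h ^ (b + 1) = c ^ (a * (j : ℤ)) * h * h ^ b := by
                rw [pow_succ']; group
            _ = h * (c ^ a * h ^ b) := by rw [← hhc1]; group
            _ = (c ^ a * h ^ b) * h := by rw [← hg1, hcom, hg1]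
            _ = c ^ a * h ^ (b + 1) := by rw [pow_succ]; group
        have e2 : c ^ (a * (j : ℤ)) = c ^ a := mul_right_cancel e1
        have e3 : c ^ (a * ((j : ℤ) - 1)) = 1 := by
          have e : a * ((j : ℤ) - 1) = a * (j : ℤ) + (-a) := by ring
          rw [e, zpow_add, e2, ← zpow_add]
          simp
        have e4 : ((2 ^ n : ℕ) : ℤ) ∣ a * ((j : ℤ) - 1) := by
          have := orderOf_dvd_iff_zpow_eq_one.mpr e3
          rwa [hc] at this
        -- produce natural number witnesses
        refine ⟨((a : ZMod (2 ^ n)).val), b, ?_, ?_⟩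
        · rw [hg1, hczn]
        · have hmod : (((a : ZMod (2 ^ n)).val : ℕ) : ℤ) = a % ((2 ^ n : ℕ) : ℤ) :=
            ZMod.val_intCast a
          have hsub : ((2 ^ n : ℕ) : ℤ) ∣ (((a : ZMod (2 ^ n)).val : ℕ) : ℤ) - a := by
            refine ⟨-(a / ((2 ^ n : ℕ) : ℤ)), ?_⟩
            rw [hmod, Int.emod_def]; ring
          have e5 : ((2 ^ n : ℕ) : ℤ) ∣
              (((a : ZMod (2 ^ n)).val : ℕ) : ℤ) * ((j : ℤ) - 1) := by
            have e : (((a : ZMod (2 ^ n)).val : ℕ) : ℤ) * ((j : ℤ) - 1)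
                = ((((a : ZMod (2 ^ n)).val : ℕ) : ℤ) - a) * ((j : ℤ) - 1)
                  + a * ((j : ℤ) - 1) := by ring
            rw [e]
            exact dvd_add (hsub.mul_right _) e4
          have hcast : (((((a : ZMod (2 ^ n)).val) * (j - 1)) : ℕ) : ℤ)
              = (((a : ZMod (2 ^ n)).val : ℕ) : ℤ) * ((j : ℤ) - 1) := by
            push_cast [Nat.cast_sub hj1]
            ring
          have := hcast ▸ e5
          exact_mod_cast this
      · -- g = c^a x h^b : impossible
        exfalso
        have e1 : c ^ (a * (j : ℤ) + k) * x * h ^ (b + 1) = c ^ a * x * h ^ (b + 1) := by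
          calc c ^ (a * (j : ℤ) + k) * x * h ^ (b + 1)
              = c ^ (a * (j : ℤ)) * (c ^ (k : ℤ) * x * h) * h ^ b := by
                rw [zpow_add, pow_succ']; group
            _ = c ^ (a * (j : ℤ)) * (h * x) * h ^ b := by rw [hhx1]
            _ = (c ^ (a * (j : ℤ)) * h) * (x * h ^ b) := by group
            _ = (h * c ^ a) * (x * h ^ b) := by rw [← hhc1]
            _ = h * (c ^ a * x * h ^ b) := by group
            _ = (c ^ a * x * h ^ b) * h := by rw [← hg1, hcom, hg1]
            _ = c ^ a * x * h ^ (b + 1) := by rw [pow_succ]; group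
        have e2 : c ^ (a * (j : ℤ) + k) = c ^ a := by
          have := mul_right_cancel e1
          exact mul_right_cancel this
        have e3 : c ^ (a * ((j : ℤ) - 1) + k) = 1 := by
          have e : a * ((j : ℤ) - 1) + k = (a * (j : ℤ) + k) + (-a) := by ring
          rw [e, zpow_add, e2, ← zpow_add]
          simp
        have e4 : ((2 ^ n : ℕ) : ℤ) ∣ a * ((j : ℤ) - 1) + k := by
          have := orderOf_dvd_iff_zpow_eq_one.mpr e3
          rwa [hc] at this
        exact hparity a e4
    · rintro ⟨a, b, rfl, hdvd⟩
      have h1 : c ^ ((a : ℤ) * ((j : ℤ) - 1)) = 1 := by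
        have h2 : orderOf c ∣ a * (j - 1) := by rw [hc]; exact hdvd
        have h3 : c ^ (a * (j - 1) : ℕ) = 1 := orderOf_dvd_iff_pow_eq_one.mp h2
        have hcast : ((a * (j - 1) : ℕ) : ℤ) = (a : ℤ) * ((j : ℤ) - 1) := by
          push_cast [Nat.cast_sub hj1]
          ring
        rw [← hcast, zpow_natCast]
        exact h3
      have := hcent_of (a : ℤ) b h1
      rwa [zpow_natCast] at this
  -- normalizer equals centralizer
  have hNC : Subgroup.normalizer ((Subgroup.zpowers h : Subgroup P) : Set P)
      = Subgroup.centralizer ((Subgroup.zpowers h : Subgroup P) : Set P) := by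
    apply le_antisymm
    · intro g hg
      have hmem := Subgroup.mem_normalizer_iff.mp hg
      have hgh : g * h * g⁻¹ ∈ Subgroup.zpowers h := (hmem h).mp (Subgroup.mem_zpowers h)
      obtain ⟨w, hw⟩ := Subgroup.mem_zpowers_iff.mp hgh
      obtain ⟨a, b, hg1 | hg1⟩ := hS g
      · have e1 : g * h * g⁻¹ = c ^ (a * (1 - (j : ℤ))) * h := by
          rw [hg1]
          calc c ^ a * h ^ b * h * (c ^ a * h ^ b)⁻¹
              = c ^ a * (h ^ b * h * (h ^ b)⁻¹) * c ^ (-a) := by group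
            _ = c ^ a * h * c ^ (-a) := by group
            _ = c ^ a * (c ^ ((-a) * (j : ℤ)) * h) := by rw [mul_assoc, hhc1]
            _ = c ^ (a * (1 - (j : ℤ))) * h := by
                rw [← mul_assoc, ← zpow_add]
                congr 2
                ring
        have e2 : c ^ (a * (1 - (j : ℤ))) * h ^ (1 : ℕ) = h ^ w := by
          rw [pow_one, ← e1, ← hw]
        have e3 := hsep _ 1 w e2
        have e4 : c ^ ((a : ℤ) * ((j : ℤ) - 1)) = 1 := by
          have e : a * ((j : ℤ) - 1) = -(a * (1 - (j : ℤ))) := by ring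
          rw [e, zpow_neg, e3, inv_one]
        rw [hg1]
        exact hcent_of a b e4
      · exfalso
        have e1 : g * h * g⁻¹ = c ^ (a - k - a * (j : ℤ)) * h := by
          rw [hg1]
          calc c ^ a * x * h ^ b * h * (c ^ a * x * h ^ b)⁻¹
              = c ^ a * (x * (h ^ b * h * (h ^ b)⁻¹) * x⁻¹) * c ^ (-a) := by group
            _ = c ^ a * (x * h * x) * c ^ (-a) := by rw [hxinv]; group
            _ = c ^ a * (c ^ (-(k : ℤ)) * h) * c ^ (-a) := by rw [hxh]
            _ = c ^ (a + -(k : ℤ)) * (h * c ^ (-a)) := by rw [zpow_add]; group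
            _ = c ^ (a + -(k : ℤ)) * (c ^ ((-a) * (j : ℤ)) * h) := by rw [hhc1]
            _ = c ^ (a - k - a * (j : ℤ)) * h := by
                rw [← mul_assoc, ← zpow_add]
                congr 2
                ring
        have e2 : c ^ (a - k - a * (j : ℤ)) * h ^ (1 : ℕ) = h ^ w := by
          rw [pow_one, ← e1, ← hw]
        have e3 := hsep _ 1 w e2
        have e4 : ((2 ^ n : ℕ) : ℤ) ∣ (a - k - a * (j : ℤ)) := by
          have := orderOf_dvd_iff_zpow_eq_one.mpr e3
          rwa [hc] at this
        have e5 : ((2 ^ n : ℕ) : ℤ) ∣ a * ((j : ℤ) - 1) + k := by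
          obtain ⟨t, ht⟩ := e4
          exact ⟨-t, by linear_combination -ht⟩
        exact hparity a e5
    · intro g hg
      rw [Subgroup.mem_normalizer_iff]
      have hfix : ∀ t ∈ Subgroup.zpowers h, g * t * g⁻¹ = t := by
        intro t ht
        have hcom := Subgroup.mem_centralizer_iff.mp hg t (SetLike.mem_coe.mpr ht)
        rw [mul_inv_eq_iff_eq_mul]
        exact hcom.symm
      intro t
      constructor
      · intro ht
        rw [hfix t ht]
        exact ht
      · intro ht
        have e1 := hfix _ ht
        have e2 : g * t * g⁻¹ = t := by
          calc g * t * g⁻¹ = g⁻¹ * (g * (g * t * g⁻¹) * g⁻¹) * g := by group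
            _ = g⁻¹ * (g * t * g⁻¹) * g := by rw [e1]
            _ = t := by group
        rw [← e2]
        exact ht
  -- counting
  refine ⟨hCiff, ?_⟩
  set g0 := Nat.gcd (j - 1) (2 ^ n) with hg0
  have h2npos : 0 < 2 ^ n := by positivity
  have hg0pos : 0 < g0 := Nat.gcd_pos_of_pos_right _ h2npos
  have hg0dvd : g0 ∣ 2 ^ n := Nat.gcd_dvd_right _ _
  set d := 2 ^ n / g0 with hd
  have hdg : d * g0 = 2 ^ n := Nat.div_mul_cancel hg0dvd
  have hdpos : 0 < d := Nat.div_pos (Nat.le_of_dvd h2npos hg0dvd) hg0pos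
  obtain ⟨e, he⟩ := Nat.gcd_dvd_left (j - 1) (2 ^ n)
  rw [← hg0] at he
  have hcop : Nat.Coprime d e := by
    have h1 := Nat.coprime_div_gcd_div_gcd (m := j - 1) (n := 2 ^ n) hg0pos
    have he' : (j - 1) / g0 = e := by rw [he]; exact Nat.mul_div_cancel_left e hg0pos
    rw [he'] at h1
    exact h1.symm
  have hcond : ∀ v : ℕ, (2 ^ n ∣ v * (j - 1)) ↔ d ∣ v := by
    intro v
    constructor
    · intro hv
      have hv' : d * g0 ∣ (v * e) * g0 := by
        have e2 : v * (j - 1) = v * e * g0 := by rw [he]; ring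
        rw [e2] at hv
        rwa [← hdg] at hv
      have h2 : d ∣ v * e := (Nat.mul_dvd_mul_iff_right hg0pos).mp hv'
      exact hcop.dvd_of_dvd_mul_right h2
    · rintro ⟨u, rfl⟩
      refine ⟨u * e, ?_⟩
      calc d * u * (j - 1) = d * u * (g0 * e) := by rw [← he]
        _ = (d * g0) * (u * e) := by ring
        _ = 2 ^ n * (u * e) := by rw [hdg]
  -- cardinality of the divisibility subtype
  have hAcard : Nat.card {a : ZMod (2 ^ n) // d ∣ a.val} = g0 := by
    have hlt : ∀ i : Fin g0, d * (i : ℕ) < 2 ^ n := by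
      intro i
      calc d * (i : ℕ) < d * g0 := by
            exact Nat.mul_lt_mul_of_pos_left i.2 hdpos
        _ = 2 ^ n := hdg
    have hFbij : Function.Bijective
        (fun i : Fin g0 => (⟨((d * (i : ℕ) : ℕ) : ZMod (2 ^ n)),
          by rw [ZMod.val_cast_of_lt (hlt i)]; exact dvd_mul_right d _⟩ :
          {a : ZMod (2 ^ n) // d ∣ a.val})) := by
      constructor
      · intro i i' hii
        have h1 : ((d * (i : ℕ) : ℕ) : ZMod (2 ^ n)).val
            = ((d * (i' : ℕ) : ℕ) : ZMod (2 ^ n)).val := by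
          rw [Subtype.mk.injEq] at hii
          rw [hii]
        rw [ZMod.val_cast_of_lt (hlt i), ZMod.val_cast_of_lt (hlt i')] at h1
        exact Fin.ext (Nat.eq_of_mul_eq_mul_left hdpos h1)
      · rintro ⟨a, u, hu⟩
        have hub : d * u < 2 ^ n := by rw [← hu]; exact ZMod.val_lt a
        have hult : u < g0 := by
          rw [← hdg] at hub
          exact Nat.lt_of_mul_lt_mul_left hub
        refine ⟨⟨u, hult⟩, ?_⟩
        apply Subtype.ext
        show ((d * u : ℕ) : ZMod (2 ^ n)) = a
        rw [← hu]
        exact ZMod.natCast_rightInverse a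
    have := Nat.card_eq_of_bijective _ hFbij
    rw [← this, Nat.card_eq_fintype_card, Fintype.card_fin]
  -- natural-exponent reduction for c
  have hcnn : ∀ a : ℕ, c ^ ((a : ZMod (2 ^ n)).val) = c ^ a := by
    intro a
    rw [ZMod.val_natCast, ← hc, pow_mod_orderOf]
  -- cardinality of the centralizer
  have hCcard : Nat.card
      (Subgroup.centralizer ((Subgroup.zpowers h : Subgroup P) : Set P)) = g0 * 2 ^ m := by
    have hf0 : ∀ (a : ZMod (2 ^ n)) (b : ZMod (2 ^ m)),
        f (a, 0, b) = c ^ a.val * h ^ b.val := by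
      intro a b
      show c ^ a.val * x ^ ((0 : ZMod 2).val) * h ^ b.val = _
      simp
    have hGbij : Function.Bijective
        (fun p : {a : ZMod (2 ^ n) // d ∣ a.val} × ZMod (2 ^ m) =>
          (⟨c ^ (p.1.1.val) * h ^ (p.2.val),
            (hCiff _).mpr ⟨p.1.1.val, p.2.val, rfl, (hcond _).mpr p.1.2⟩⟩ :
            Subgroup.centralizer ((Subgroup.zpowers h : Subgroup P) : Set P))) := by
      constructor
      · intro p q hpq
        rw [Subtype.mk.injEq] at hpq
        have h1 : f (p.1.1, 0, p.2) = f (q.1.1, 0, q.2) := by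
          rw [hf0, hf0, hpq]
        have h2 := hbij.injective h1
        have h3 : p.1.1 = q.1.1 := congrArg Prod.fst h2
        have h4 : p.2 = q.2 := congrArg (fun t => t.2.2) h2
        exact Prod.ext (Subtype.ext h3) h4
      · rintro ⟨g, hgC⟩
        obtain ⟨a, b, hgab, hdvd⟩ := (hCiff g).mp hgC
        have hmoddvd : 2 ^ n ∣ (a % 2 ^ n) * (j - 1) := by
          have hsplit : a * (j - 1) = 2 ^ n * ((a / 2 ^ n) * (j - 1)) + (a % 2 ^ n) * (j - 1) := by
            conv_lhs => rw [← Nat.div_add_mod a (2 ^ n)]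
            ring
          have h2 : 2 ^ n ∣ 2 ^ n * ((a / 2 ^ n) * (j - 1)) := dvd_mul_right _ _
          have h3 := Nat.dvd_sub (hsplit ▸ hdvd) h2
          rwa [Nat.add_sub_cancel_left] at h3
        have hcondval : d ∣ ((a : ZMod (2 ^ n)).val) := by
          rw [ZMod.val_natCast]
          exact (hcond _).mp hmoddvd
        refine ⟨⟨⟨(a : ZMod (2 ^ n)), hcondval⟩, (b : ZMod (2 ^ m))⟩, ?_⟩
        apply Subtype.ext
        show c ^ ((a : ZMod (2 ^ n)).val) * h ^ ((b : ZMod (2 ^ m)).val) = g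
        rw [hcnn, hhzn, hgab]
    have h1 := Nat.card_eq_of_bijective _ hGbij
    rw [← h1, Nat.card_prod, hAcard, Nat.card_zmod]
  -- final index computation
  have hNcard : Nat.card (Subgroup.normalizer ((Subgroup.zpowers h : Subgroup P) : Set P)) = g0 * 2 ^ m := by
    rw [hNC]
    exact hCcard
  have hindex := Subgroup.card_mul_index (Subgroup.normalizer ((Subgroup.zpowers h : Subgroup P) : Set P))
  rw [hNcard, hcard] at hindex
  have hpos : 0 < g0 * 2 ^ m := by positivity
  have h2n1 : 2 ^ (n + 1 + m) = (g0 * 2 ^ m) * (2 * d) := by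
    have hgd : g0 * d = 2 ^ n := by rw [mul_comm]; exact hdg
    calc 2 ^ (n + 1 + m) = (2 ^ n) * 2 * 2 ^ m := by ring
      _ = (g0 * d) * 2 * 2 ^ m := by rw [hgd]
      _ = (g0 * 2 ^ m) * (2 * d) := by ring
  have hidx : (Subgroup.normalizer ((Subgroup.zpowers h : Subgroup P) : Set P)).index = 2 * d := by
    apply Nat.eq_of_mul_eq_mul_left hpos
    rw [hindex, h2n1]
  have hfinal : 2 ^ (n + 1) / g0 = 2 * d := by
    have e : 2 ^ (n + 1) = g0 * (2 * d) := by
      calc 2 ^ (n + 1) = 2 ^ n * 2 := by ring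
        _ = (d * g0) * 2 := by rw [hdg]
        _ = g0 * (2 * d) := by ring
    rw [e, Nat.mul_div_cancel_left _ hg0pos]
  rw [hidx, hfinal]
end

section
/- Let P = K ⋊ ⟨h⟩ with K dihedral of order 2^{n+1} (n ≥ 2), h c h^{-1} = c^j, h x h^{-1} = c^k x, with j odd and k odd, and h of order 2^m. Then all non-central involutions of K are conjugate in P. -/
/-- `P = K ⋊ ⟨h⟩` with `K = ⟨c,x⟩` dihedral of order `2^(n+1)`
(`n ≥ 2`), `h` of order `2^m`, `h c h⁻¹ = c^j`, `h x h⁻¹ = c^k x`, `j` and `k`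
odd. Then all non-central involutions of `K` are conjugate in `P`. -/
theorem stmt_16 (n m j k : ℕ) (hn : 2 ≤ n) (hj : Odd j) (hk : Odd k)
    (P : Type*) [Group P] (c x h : P)
    (hc : orderOf c = 2 ^ n) (hx : orderOf x = 2)
    (hxc : x * c * x = c⁻¹)
    (hh : orderOf h = 2 ^ m)
    (hhc : h * c * h⁻¹ = c ^ j)
    (hhx : h * x * h⁻¹ = c ^ k * x)
    (hgen : Subgroup.closure {c, x, h} = (⊤ : Subgroup P))
    (hcard : Nat.card P = 2 ^ (n + 1 + m)) :
    ∀ g g' : P, g ∈ Subgroup.closure ({c, x} : Set P) →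
      g' ∈ Subgroup.closure ({c, x} : Set P) →
      orderOf g = 2 → orderOf g' = 2 →
      (∃ y ∈ Subgroup.closure ({c, x} : Set P), g * y ≠ y * g) →
      (∃ y ∈ Subgroup.closure ({c, x} : Set P), g' * y ≠ y * g') →
      IsConj g g' := by
  intro g g' hg hg' hog hog' hnc hnc'
  have hx2 : x * x = 1 := by
    have := pow_orderOf_eq_one x
    rwa [hx, sq] at this
  have hxinv : x⁻¹ = x := inv_eq_of_mul_eq_one_right hx2
  -- x * c^i = c^(-i) * x
  have hswap : ∀ i : ℤ, x * c ^ i = c ^ (-i) * x := by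
    intro i
    have h1 : (MulAut.conj x) c = c⁻¹ := by
      simp only [MulAut.conj_apply, hxinv]; exact hxc
    have h2 : (MulAut.conj x) (c ^ i) = c ^ (-i) := by
      rw [map_zpow, h1]; group
    simp only [MulAut.conj_apply, hxinv] at h2
    calc x * c ^ i = (x * c ^ i * x) * x := by rw [mul_assoc, hx2, mul_one]
    _ = c ^ (-i) * x := by rw [h2]
  -- h * c^i = c^(j*i) * h
  have hhswap : ∀ i : ℤ, h * c ^ i = c ^ ((j : ℤ) * i) * h := by
    intro i
    have h2 : (MulAut.conj h) (c ^ i) = c ^ ((j : ℤ) * i) := by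
      rw [map_zpow]
      have h1 : (MulAut.conj h) c = c ^ (j : ℤ) := by
        simp only [MulAut.conj_apply, zpow_natCast]; exact hhc
      rw [h1, ← zpow_mul]
    simp only [MulAut.conj_apply] at h2
    calc h * c ^ i = (h * c ^ i * h⁻¹) * h := by group
    _ = c ^ ((j : ℤ) * i) * h := by rw [h2]
  -- structure of K
  have hK : ∀ g ∈ Subgroup.closure ({c, x} : Set P),
      (∃ i : ℤ, g = c ^ i) ∨ (∃ i : ℤ, g = c ^ i * x) := by
    intro g hg
    induction hg using Subgroup.closure_induction with
    | mem a ha =>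
      rcases ha with rfl | rfl
      · exact Or.inl ⟨1, by simp⟩
      · exact Or.inr ⟨0, by simp⟩
    | one => exact Or.inl ⟨0, by simp⟩
    | mul a b _ _ ha hb =>
      rcases ha with ⟨i, rfl⟩ | ⟨i, rfl⟩ <;> rcases hb with ⟨i', rfl⟩ | ⟨i', rfl⟩
      · exact Or.inl ⟨i + i', by rw [zpow_add]⟩
      · exact Or.inr ⟨i + i', by rw [zpow_add, mul_assoc]⟩
      · refine Or.inr ⟨i - i', ?_⟩
        rw [mul_assoc, hswap i', ← mul_assoc, ← zpow_add, sub_eq_add_neg]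
      · refine Or.inl ⟨i - i', ?_⟩
        calc c ^ i * x * (c ^ i' * x) = c ^ i * (x * c ^ i') * x := by group
        _ = c ^ i * (c ^ (-i') * x) * x := by rw [hswap i']
        _ = c ^ i * c ^ (-i') * (x * x) := by group
        _ = c ^ (i - i') := by rw [hx2, mul_one, ← zpow_add, sub_eq_add_neg]
    | inv a _ ha =>
      rcases ha with ⟨i, rfl⟩ | ⟨i, rfl⟩
      · exact Or.inl ⟨-i, by rw [zpow_neg]⟩
      · refine Or.inr ⟨i, ?_⟩
        rw [mul_inv_rev, hxinv, ← zpow_neg, hswap (-i), neg_neg]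
  -- central case is impossible
  have hcentral : ∀ i : ℤ, (c ^ i) * (c ^ i) = 1 →
      ∀ y ∈ Subgroup.closure ({c, x} : Set P), (c ^ i) * y = y * (c ^ i) := by
    intro i hi2 y hy
    have hneg : c ^ (-i) = c ^ i := by
      rw [zpow_neg]; exact inv_eq_of_mul_eq_one_right hi2
    have hcomx : Commute (c ^ i) x := by
      unfold Commute SemiconjBy
      rw [hswap i, hneg]
    induction hy using Subgroup.closure_induction with
    | mem a ha =>
      rcases ha with rfl | rfl
      · exact (Commute.refl _).zpow_left i
      · exact hcomx
    | one => simp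
    | mul a b _ _ ha hb =>
      calc c ^ i * (a * b) = (c ^ i * a) * b := by group
      _ = a * (c ^ i * b) := by rw [ha]; group
      _ = a * b * c ^ i := by rw [hb]; group
    | inv a _ ha =>
      have : Commute (c ^ i) a := ha
      exact this.inv_right
  -- g and g' are of the form c^a * x
  have hform : ∀ w : P, w ∈ Subgroup.closure ({c, x} : Set P) → orderOf w = 2 →
      (∃ y ∈ Subgroup.closure ({c, x} : Set P), w * y ≠ y * w) → ∃ a : ℤ, w = c ^ a * x := by
    intro w hw how hnw
    rcases hK w hw with ⟨i, rfl⟩ | ⟨a, rfl⟩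
    · exfalso
      obtain ⟨y, hy, hny⟩ := hnw
      have hi2 : (c ^ i) * (c ^ i) = 1 := by
        have := pow_orderOf_eq_one (c ^ i)
        rwa [how, sq] at this
      exact hny (hcentral i hi2 y hy)
    · exact ⟨a, rfl⟩
  obtain ⟨a, rfl⟩ := hform g hg hog hnc
  obtain ⟨b, rfl⟩ := hform g' hg' hog' hnc'
  -- conjugation by c^t : c^a x ↦ c^(a+2t) x
  have hconjc : ∀ a t : ℤ, IsConj (c ^ a * x) (c ^ (a + 2 * t) * x) := by
    intro a t
    rw [isConj_iff]
    refine ⟨c ^ t, ?_⟩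
    calc c ^ t * (c ^ a * x) * (c ^ t)⁻¹
        = c ^ (t + a) * (x * c ^ (-t)) := by rw [zpow_add]; group
    _ = c ^ (t + a) * (c ^ t * x) := by rw [hswap (-t)]; simp
    _ = c ^ (a + 2 * t) * x := by
      rw [← mul_assoc, ← zpow_add, show t + a + t = a + 2 * t by ring]
  -- conjugation by h : c^a x ↦ c^(j*a+k) x
  have hconjh : ∀ a : ℤ, IsConj (c ^ a * x) (c ^ ((j : ℤ) * a + (k : ℤ)) * x) := by
    intro a
    rw [isConj_iff]
    refine ⟨h, ?_⟩
    calc h * (c ^ a * x) * h⁻¹ = (h * c ^ a) * (x * h⁻¹) := by group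
    _ = (c ^ ((j : ℤ) * a) * h) * (x * h⁻¹) := by rw [hhswap a]
    _ = c ^ ((j : ℤ) * a) * (h * x * h⁻¹) := by group
    _ = c ^ ((j : ℤ) * a) * (c ^ (k : ℤ) * x) := by rw [hhx, zpow_natCast]
    _ = c ^ ((j : ℤ) * a + (k : ℤ)) * x := by rw [zpow_add, mul_assoc]
  by_cases hpar : Even (b - a)
  · obtain ⟨t, ht⟩ := hpar
    have : b = a + 2 * t := by omega
    rw [this]
    exact hconjc a t
  · obtain ⟨p, hp⟩ := hj
    obtain ⟨q, hq⟩ := hk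
    rw [Int.not_even_iff_odd] at hpar
    obtain ⟨r, hr⟩ := hpar
    have hb : b = ((j : ℤ) * a + (k : ℤ)) + 2 * (r - p * a - q) := by
      have hj' : (j : ℤ) = 2 * p + 1 := by exact_mod_cast hp
      have hk' : (k : ℤ) = 2 * q + 1 := by exact_mod_cast hq
      rw [hj', hk']; ring_nf; omega
    rw [hb]
    exact (hconjh a).trans (hconjc _ _)
end

section
/- Let P = K ⋊ ⟨h⟩ with K dihedral of order 2^{n+1} (n ≥ 2), h of order 2^m, h c h^{-1} = c^j with j ≡ 3 (mod 4), h x h^{-1} = c^k x with k odd, and suppose 2^n | j^{2^{m-1}} − 1 and 2^n | k(1 + j + ⋯ + j^{2^{m-1}−1}). If a, b ∈ ℤ/2^nℤ satisfy 2b + k(j+1) + a(j²−1) ≡ 0 (mod 2^n), then the element c^b h² has order 2^{m-1} in P. -/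
open Finset

section aux

lemma stmt17_geom_prod (r s : ℕ) :
    ∑ i ∈ range (2 ^ s), r ^ i = ∏ t ∈ range s, (1 + r ^ 2 ^ t) := by
  induction s with
  | zero => simp
  | succ s ih =>
    rw [prod_range_succ, ← ih, pow_succ, mul_two, Finset.sum_range_add]
    rw [mul_add, mul_one, Finset.sum_mul]
    congr 1
    refine Finset.sum_congr rfl fun i _ => ?_
    rw [pow_add, mul_comm]

lemma stmt17_sq_pow_mod_four {j : ℕ} (hj : j % 2 = 1) (N : ℕ) : (j ^ 2) ^ N % 4 = 1 := by
  have h2 : j ^ 2 % 4 = 1 := by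
    have := Nat.pow_mod j 2 4
    have h4 : j % 4 = 1 ∨ j % 4 = 3 := by omega
    rcases h4 with h | h <;> rw [this, h] <;> norm_num
  rw [Nat.pow_mod, h2, one_pow]
  norm_num

lemma stmt17_tail_odd {j : ℕ} (hj : j % 2 = 1) (s : ℕ) :
    ∃ w, w % 2 = 1 ∧ ∏ t ∈ range s, (1 + j ^ 2 ^ (t + 1)) = 2 ^ s * w := by
  induction s with
  | zero => exact ⟨1, by norm_num⟩
  | succ s ih =>
    obtain ⟨w, hw, hprod⟩ := ih
    have hf : (1 + j ^ 2 ^ (s + 1)) % 4 = 2 := by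
      have : j ^ 2 ^ (s + 1) % 4 = 1 := by
        rw [pow_succ, mul_comm, pow_mul]; exact stmt17_sq_pow_mod_four hj _
      omega
    have hu : (1 + j ^ 2 ^ (s + 1)) = 2 * ((1 + j ^ 2 ^ (s + 1)) / 2) := by omega
    obtain ⟨u, hu2⟩ : ∃ u, 1 + j ^ 2 ^ (s + 1) = 2 * u := ⟨_, hu⟩
    have huodd : u % 2 = 1 := by omega
    refine ⟨w * u, by rw [Nat.mul_mod, hw, huodd], ?_⟩
    rw [prod_range_succ, hprod, hu2]; ring

lemma stmt17_main_dvd (n m j k a b : ℕ) (hm : 2 ≤ m) (hj : j % 4 = 3) (hk : Odd k)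
    (hact2 : 2 ^ n ∣ k * ∑ t ∈ Finset.range (2 ^ (m - 1)), j ^ t)
    (hab : 2 ^ n ∣ 2 * b + k * (j + 1) + a * (j ^ 2 - 1)) :
    2 ^ n ∣ b * ∑ i ∈ range (2 ^ (m - 1)), (j ^ 2) ^ i := by
  have hj2 : j % 2 = 1 := by omega
  have hS : (2 : ℕ) ^ (m - 1) ∣ ∑ i ∈ range (2 ^ (m - 1)), (j ^ 2) ^ i := by
    rw [stmt17_geom_prod]
    calc (2:ℕ) ^ (m-1) = ∏ _t ∈ range (m-1), 2 := by rw [Finset.prod_const, card_range]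
    _ ∣ ∏ t ∈ range (m-1), (1 + (j ^ 2) ^ 2 ^ t) := by
        refine Finset.prod_dvd_prod_of_dvd _ _ fun t _ => ?_
        have := stmt17_sq_pow_mod_four hj2 (2 ^ t)
        omega
  rcases le_or_gt n (m - 1) with hcase | hcase
  · exact dvd_mul_of_dvd_right ((pow_dvd_pow 2 hcase).trans hS) b
  have hmn : m ≤ n := by omega
  have hT : ∑ t ∈ range (2 ^ (m - 1)), j ^ t
      = (∏ t ∈ range (m - 2), (1 + j ^ 2 ^ (t + 1))) * (1 + j ^ 2 ^ 0) := by
    rw [stmt17_geom_prod]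
    have h1 : m - 1 = (m - 2) + 1 := by omega
    rw [h1, prod_range_succ']
  obtain ⟨w, hw, hprod⟩ := stmt17_tail_odd hj2 (m - 2)
  have hkodd : k % 2 = 1 := Nat.odd_iff.mp hk
  have hcop : Nat.Coprime (2 ^ n) k := by
    refine Nat.Coprime.pow_left _ ?_
    simpa [Nat.coprime_two_left, Nat.odd_iff] using hkodd
  have hT2 : 2 ^ n ∣ ∑ t ∈ range (2 ^ (m - 1)), j ^ t := hcop.dvd_of_dvd_mul_left hact2
  rw [hT, hprod] at hT2
  have hcopw : Nat.Coprime (2 ^ n) w := by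
    refine Nat.Coprime.pow_left _ ?_
    simpa [Nat.coprime_two_left, Nat.odd_iff] using hw
  have hT3 : 2 ^ n ∣ 2 ^ (m - 2) * (1 + j ^ 2 ^ 0) := by
    refine hcopw.dvd_of_dvd_mul_left ?_
    calc (2:ℕ)^n ∣ 2 ^ (m-2) * w * (1 + j ^ 2 ^ 0) := hT2
    _ = w * (2 ^ (m-2) * (1 + j ^ 2 ^ 0)) := by ring
  set r := n - m + 2 with hr
  have hrn : 2 ^ (m - 2) * 2 ^ r = 2 ^ n := by
    rw [← pow_add]; congr 1; omega
  have hrj : 2 ^ r ∣ 1 + j := by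
    have := hT3
    rw [← hrn] at this
    simpa [pow_zero, pow_one] using
      (mul_dvd_mul_iff_left (a := (2:ℕ)^(m-2)) (by positivity)).mp this
  have hrle : (2:ℕ) ^ r ∣ 2 ^ n := pow_dvd_pow 2 (by omega)
  have hsq : j ^ 2 - 1 = (1 + j) * (j - 1) := by
    have h := Nat.sq_sub_sq j 1
    simpa [add_comm, one_pow] using h
  have h2b : 2 ^ r ∣ 2 * b := by
    have h1 : 2 ^ r ∣ 2 * b + k * (j + 1) + a * (j ^ 2 - 1) := hrle.trans hab
    have h2 : 2 ^ r ∣ k * (j + 1) := Dvd.dvd.mul_left (by simpa [add_comm] using hrj) k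
    have h3 : 2 ^ r ∣ a * (j ^ 2 - 1) := by
      rw [hsq]; exact Dvd.dvd.mul_left (hrj.mul_right _) a
    have h4 := Nat.dvd_sub h1 (dvd_add h2 h3)
    have heq : 2 * b + k * (j + 1) + a * (j ^ 2 - 1) - (k * (j + 1) + a * (j ^ 2 - 1)) = 2 * b := by
      omega
    rwa [heq] at h4
  obtain ⟨z, hz⟩ := h2b
  have hb : b = 2 ^ (r - 1) * z := by
    have h2r : (2:ℕ) ^ r = 2 * 2 ^ (r - 1) := by
      conv_lhs => rw [show r = 1 + (r - 1) by omega]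
      rw [pow_add, pow_one]
    rw [h2r, mul_assoc] at hz
    exact Nat.eq_of_mul_eq_mul_left (by norm_num) hz
  obtain ⟨y, hy⟩ := hS
  rw [hb, hy]
  have : (2:ℕ) ^ n = 2 ^ (r - 1) * 2 ^ (m - 1) := by
    rw [← pow_add]; congr 1; omega
  rw [this]
  calc 2 ^ (r-1) * 2 ^ (m-1) ∣ (2 ^ (r-1) * z) * (2 ^ (m-1) * y) :=
        mul_dvd_mul (dvd_mul_right _ _) (dvd_mul_right _ _)

end aux

/-- `P = K ⋊ ⟨h⟩` with `K` dihedral of order `2^(n+1)` (`n ≥ 2`),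
`h` of order `2^m`, `h c h⁻¹ = c^j` with `j ≡ 3 (mod 4)`, `h x h⁻¹ = c^k x` with
`k` odd, and `h^(2^(m-1))` centralising `K`. If `2b + k(j+1) + a(j²−1) ≡ 0
(mod 2^n)`, then `c^b h²` has order `2^(m-1)`. -/
theorem stmt_17 (n m j k : ℕ) (hn : 2 ≤ n) (hj : j % 4 = 3) (hk : Odd k)
    (hact1 : 2 ^ n ∣ j ^ 2 ^ (m - 1) - 1)
    (hact2 : 2 ^ n ∣ k * ∑ t ∈ Finset.range (2 ^ (m - 1)), j ^ t)
    (P : Type*) [Group P] (c x h : P)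
    (hc : orderOf c = 2 ^ n) (hx : orderOf x = 2)
    (hxc : x * c * x = c⁻¹)
    (hh : orderOf h = 2 ^ m)
    (hhc : h * c * h⁻¹ = c ^ j)
    (hhx : h * x * h⁻¹ = c ^ k * x)
    (hgen : Subgroup.closure {c, x, h} = (⊤ : Subgroup P))
    (hcard : Nat.card P = 2 ^ (n + 1 + m))
    (a b : ℕ)
    (hab : 2 ^ n ∣ 2 * b + k * (j + 1) + a * (j ^ 2 - 1)) :
    orderOf (c ^ b * h ^ 2) = 2 ^ (m - 1) := by
  classical
  have hj3 : 3 ≤ j := by omega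
  -- m ≥ 2
  have hm : 2 ≤ m := by
    by_contra hm'
    have h1 : m - 1 = 0 := by omega
    rw [h1] at hact1
    simp only [pow_zero, pow_one] at hact1
    have h4 : (4:ℕ) ∣ j - 1 := by
      refine dvd_trans ?_ hact1
      have : (2:ℕ)^2 ∣ 2^n := pow_dvd_pow 2 hn
      simpa using this
    omega
  -- basic power facts
  have hcpow : c ^ (2:ℕ) ^ n = 1 := by rw [← hc]; exact pow_orderOf_eq_one c
  have hhpow : h ^ (2:ℕ) ^ m = 1 := by rw [← hh]; exact pow_orderOf_eq_one h
  have hx2 : x * x = 1 := by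
    have := pow_orderOf_eq_one x
    rwa [hx, pow_two] at this
  have hxinv : x⁻¹ = x := by
    rw [inv_eq_iff_mul_eq_one]; exact hx2
  have hxc' : x * c * x⁻¹ = c⁻¹ := by rw [hxinv]; exact hxc
  -- conjugation formulas (integers)
  have hxcz : ∀ i : ℤ, x * c ^ i = c ^ (-i) * x := by
    intro i
    have h1 : (x * c * x⁻¹) ^ i = x * c ^ i * x⁻¹ := conj_zpow
    rw [hxc'] at h1
    have h2 : x * c ^ i * x⁻¹ = c ^ (-i) := by rw [← h1, inv_zpow, zpow_neg]
    exact mul_inv_eq_iff_eq_mul.mp h2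
  have hhcz : ∀ i : ℤ, h * c ^ i * h⁻¹ = c ^ ((j:ℤ) * i) := by
    intro i
    have h1 : (h * c * h⁻¹) ^ i = h * c ^ i * h⁻¹ := conj_zpow
    rw [hhc] at h1
    rw [← h1, ← zpow_natCast c j, ← zpow_mul]
  -- the subgroup K = <c, x>
  let K : Subgroup P :=
    { carrier := {g | ∃ i : ℤ, g = c ^ i ∨ g = c ^ i * x}
      one_mem' := ⟨0, Or.inl (by simp)⟩
      mul_mem' := by
        rintro p q ⟨i, rfl | rfl⟩ ⟨i', rfl | rfl⟩
        · exact ⟨i + i', Or.inl (by rw [zpow_add])⟩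
        · exact ⟨i + i', Or.inr (by rw [zpow_add, mul_assoc])⟩
        · refine ⟨i - i', Or.inr ?_⟩
          rw [mul_assoc, hxcz i', ← mul_assoc, ← zpow_add]
          ring_nf
        · refine ⟨i - i', Or.inl ?_⟩
          calc c ^ i * x * (c ^ i' * x) = c ^ i * (x * c ^ i') * x := by group
          _ = c ^ i * (c ^ (-i') * x) * x := by rw [hxcz i']
          _ = c ^ i * c ^ (-i') * (x * x) := by group
          _ = c ^ (i - i') := by rw [hx2, mul_one, ← zpow_add]; ring_nf
      inv_mem' := by
        rintro p ⟨i, rfl | rfl⟩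
        · exact ⟨-i, Or.inl (by rw [zpow_neg])⟩
        · refine ⟨i, Or.inr ?_⟩
          rw [mul_inv_rev, hxinv, ← zpow_neg, hxcz (-i), neg_neg] }
  have hcK : ∀ i : ℤ, c ^ i ∈ K := fun i => ⟨i, Or.inl rfl⟩
  have hcKn : ∀ t : ℕ, c ^ t ∈ K := fun t => ⟨(t:ℤ), Or.inl (by rw [zpow_natCast])⟩
  have hxK : x ∈ K := ⟨0, Or.inr (by simp)⟩
  have hcxK : ∀ i : ℤ, c ^ i * x ∈ K := fun i => ⟨i, Or.inr rfl⟩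
  -- conjugation by h preserves K
  have hconjh : ∀ g ∈ K, h * g * h⁻¹ ∈ K := by
    rintro g ⟨i, rfl | rfl⟩
    · rw [hhcz i]; exact hcK _
    · have : h * (c ^ i * x) * h⁻¹ = (h * c ^ i * h⁻¹) * (h * x * h⁻¹) := by group
      rw [this, hhcz i, hhx, ← mul_assoc, ← zpow_natCast c k, ← zpow_add]
      exact hcxK _
  have hconjpow : ∀ s : ℕ, ∀ g ∈ K, h ^ s * g * (h ^ s)⁻¹ ∈ K := by
    intro s
    induction s with
    | zero => intro g hg; simpa using hg
    | succ s ih =>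
      intro g hg
      have heq : h ^ (s+1) * g * (h ^ (s+1))⁻¹
          = h * (h ^ s * g * (h ^ s)⁻¹) * h⁻¹ := by
        rw [pow_succ']; group
      rw [heq]
      exact hconjh _ (ih g hg)
  have hinvh : h⁻¹ = h ^ ((2:ℕ) ^ m - 1) := by
    have hpos : 1 ≤ (2:ℕ) ^ m := Nat.one_le_two_pow
    refine inv_eq_of_mul_eq_one_right ?_
    rw [← pow_succ', show (2:ℕ) ^ m - 1 + 1 = 2 ^ m by omega]
    exact hhpow
  have hconjinv : ∀ g ∈ K, h⁻¹ * g * h ∈ K := by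
    intro g hg
    have heq : h⁻¹ * g * h = h ^ ((2:ℕ) ^ m - 1) * g * (h ^ ((2:ℕ) ^ m - 1))⁻¹ := by
      rw [← hinvh, inv_inv]
    rw [heq]
    exact hconjpow _ g hg
  -- K is normal
  have hKnormal : K.Normal := by
    rw [← Subgroup.normalizer_eq_top_iff, eq_top_iff, ← hgen, Subgroup.closure_le]
    intro g hg
    simp only [Set.mem_insert_iff, Set.mem_singleton_iff] at hg
    rcases hg with hg | hg | hg <;> rw [hg]
    · exact Subgroup.le_normalizer (by simpa using hcKn 1)
    · exact Subgroup.le_normalizer hxK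
    · refine Subgroup.mem_normalizer_iff.mpr fun g => ⟨fun hg => hconjh g hg, fun hg => ?_⟩
      have h2 := hconjinv _ hg
      have h3 : h⁻¹ * (h * g * h⁻¹) * h = g := by group
      rwa [h3] at h2
  haveI := hKnormal
  -- finiteness
  haveI hFin : Finite P := by
    have hpos : 0 < Nat.card P := by rw [hcard]; positivity
    exact (Nat.card_pos_iff.mp hpos).2
  -- card K ≤ 2^(n+1)
  have hKcard : Nat.card K ≤ 2 ^ (n + 1) := by
    have hmem : ∀ p : Fin (2^n) × Fin 2, c ^ ((p.1 : ℕ)) * x ^ ((p.2 : ℕ)) ∈ K := by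
      rintro ⟨i, e⟩
      fin_cases e
      · simpa using hcKn (i : ℕ)
      · simpa [zpow_natCast] using hcxK ((i : ℕ) : ℤ)
    let f : Fin (2^n) × Fin 2 → K := fun p => ⟨c ^ ((p.1 : ℕ)) * x ^ ((p.2 : ℕ)), hmem p⟩
    have hred : ∀ i : ℤ, ∃ t : ℕ, t < 2 ^ n ∧ c ^ i = c ^ t := by
      intro i
      have hpos : (0:ℤ) < (((2:ℕ) ^ n : ℕ) : ℤ) := by positivity
      have h1 : c ^ (i % (((2:ℕ) ^ n : ℕ) : ℤ)) = c ^ i := by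
        rw [← zpow_mod_orderOf c i, hc]
      have h2 : 0 ≤ i % (((2:ℕ) ^ n : ℕ) : ℤ) := Int.emod_nonneg i (by positivity)
      have h3 : i % (((2:ℕ) ^ n : ℕ) : ℤ) < (((2:ℕ) ^ n : ℕ) : ℤ) := Int.emod_lt_of_pos i hpos
      refine ⟨(i % (((2:ℕ) ^ n : ℕ) : ℤ)).toNat, by omega, ?_⟩
      rw [← h1, ← zpow_natCast c, Int.toNat_of_nonneg h2]
    have hsurj : Function.Surjective f := by
      rintro ⟨g, i, rfl | rfl⟩
      · obtain ⟨t, htlt, ht⟩ := hred i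
        exact ⟨(⟨t, htlt⟩, 0), Subtype.ext (by simp [f, ht])⟩
      · obtain ⟨t, htlt, ht⟩ := hred i
        exact ⟨(⟨t, htlt⟩, 1), Subtype.ext (by simp [f, ht])⟩
    have := Nat.card_le_card_of_surjective f hsurj
    simpa [Nat.card_eq_fintype_card, pow_succ] using this
  -- the quotient
  set φ := QuotientGroup.mk' K with hφ
  have hQgen : Subgroup.zpowers (φ h) = ⊤ := by
    rw [eq_top_iff]
    have h1 : Subgroup.map φ ⊤ = ⊤ :=
      Subgroup.map_top_of_surjective φ (QuotientGroup.mk'_surjective K)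
    rw [← h1, ← hgen, MonoidHom.map_closure, Subgroup.closure_le]
    rintro g ⟨g', hg', rfl⟩
    simp only [Set.mem_insert_iff, Set.mem_singleton_iff] at hg'
    rcases hg' with hg' | hg' | hg' <;> rw [hg']
    · have : φ c = 1 := (QuotientGroup.eq_one_iff c).mpr (by simpa using hcKn 1)
      rw [this]; exact Subgroup.one_mem _
    · have : φ x = 1 := (QuotientGroup.eq_one_iff x).mpr hxK
      rw [this]; exact Subgroup.one_mem _
    · exact Subgroup.mem_zpowers _
  have hQcard : Nat.card (P ⧸ K) * Nat.card K = 2 ^ (n + 1 + m) := by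
    rw [← hcard]; exact (Subgroup.card_eq_card_quotient_mul_card_subgroup K).symm
  have hordφ : orderOf (φ h) = Nat.card (P ⧸ K) := by
    rw [← Nat.card_zpowers, hQgen, Subgroup.card_top]
  have hQge : 2 ^ m ≤ Nat.card (P ⧸ K) := by
    have hKpos : 0 < Nat.card K := Nat.card_pos
    have h1 : 2 ^ m * 2 ^ (n+1) ≤ Nat.card (P ⧸ K) * 2 ^ (n+1) := by
      calc 2 ^ m * 2 ^ (n+1) = 2 ^ (n + 1 + m) := by rw [← pow_add]; ring_nf
      _ = Nat.card (P ⧸ K) * Nat.card K := hQcard.symm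
      _ ≤ Nat.card (P ⧸ K) * 2 ^ (n+1) := Nat.mul_le_mul_left _ hKcard
    exact Nat.le_of_mul_le_mul_right h1 (by positivity)
  have hordφ2 : 2 ^ m ≤ orderOf (φ h) := hordφ ▸ hQge
  -- h^(2^(m-1)) ∉ K
  have hnotK : h ^ (2:ℕ) ^ (m-1) ∉ K := by
    intro hmem
    have h1 : (φ h) ^ (2:ℕ) ^ (m-1) = 1 := by
      rw [← map_pow]
      exact (QuotientGroup.eq_one_iff _).mpr hmem
    have h2 : orderOf (φ h) ∣ 2 ^ (m-1) := orderOf_dvd_of_pow_eq_one h1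
    have h3 : orderOf (φ h) ≤ 2 ^ (m-1) := Nat.le_of_dvd (by positivity) h2
    have h4 : (2:ℕ) ^ (m-1) < 2 ^ m := Nat.pow_lt_pow_right one_lt_two (by omega)
    omega
  -- commutation and the power formula
  have hstep : ∀ v : ℕ, h * c ^ v = c ^ (j * v) * h := by
    intro v
    have h1 : (h * c * h⁻¹) ^ v = h * c ^ v * h⁻¹ := conj_pow
    rw [hhc, ← pow_mul] at h1
    exact mul_inv_eq_iff_eq_mul.mp h1.symm
  have hcomm : ∀ s v : ℕ, h ^ s * c ^ v = c ^ (v * j ^ s) * h ^ s := by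
    intro s
    induction s with
    | zero => intro v; simp
    | succ s ih =>
      intro v
      calc h ^ (s+1) * c ^ v = h ^ s * (h * c ^ v) := by rw [pow_succ, mul_assoc]
      _ = h ^ s * (c ^ (j * v) * h) := by rw [hstep]
      _ = (h ^ s * c ^ (j * v)) * h := by rw [mul_assoc]
      _ = c ^ (j * v * j ^ s) * h ^ s * h := by rw [ih]
      _ = c ^ (v * j ^ (s+1)) * h ^ (s+1) := by
          rw [mul_assoc, ← pow_succ, show j * v * j ^ s = v * j ^ (s+1) by rw [pow_succ]; ring]
  have hkey : ∀ t : ℕ, (c ^ b * h ^ 2) ^ t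
      = c ^ (b * ∑ i ∈ Finset.range t, (j ^ 2) ^ i) * h ^ (2 * t) := by
    intro t
    induction t with
    | zero => simp
    | succ t ih =>
      rw [pow_succ, ih]
      calc c ^ (b * ∑ i ∈ Finset.range t, (j ^ 2) ^ i) * h ^ (2*t) * (c ^ b * h ^ 2)
          = c ^ (b * ∑ i ∈ Finset.range t, (j ^ 2) ^ i) * (h ^ (2*t) * c ^ b) * h ^ 2 := by
            group
      _ = c ^ (b * ∑ i ∈ Finset.range t, (j ^ 2) ^ i) * (c ^ (b * j ^ (2*t)) * h ^ (2*t)) * h ^ 2 := by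
            rw [hcomm]
      _ = c ^ (b * ∑ i ∈ Finset.range (t+1), (j ^ 2) ^ i) * h ^ (2 * (t+1)) := by
            rw [Finset.sum_range_succ, mul_add, pow_add c, show (j^2)^t = j^(2*t) by rw [← pow_mul],
              show 2*(t+1) = 2*t+2 by ring, pow_add h]
            group
  -- upper bound: (c^b h^2)^(2^(m-1)) = 1
  have h2m1 : 2 * 2 ^ (m-1) = 2 ^ m := by
    rw [← pow_succ']; congr 1; omega
  have h2m2 : 2 * 2 ^ (m-2) = 2 ^ (m-1) := by
    rw [← pow_succ']; congr 1; omega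
  have hzero : (c ^ b * h ^ 2) ^ (2:ℕ) ^ (m-1) = 1 := by
    rw [hkey, h2m1, hhpow, mul_one]
    have hdvd : 2 ^ n ∣ b * ∑ i ∈ Finset.range (2 ^ (m-1)), (j ^ 2) ^ i :=
      stmt17_main_dvd n m j k a b hm hj hk hact2 hab
    exact orderOf_dvd_iff_pow_eq_one.mp (hc ▸ hdvd)
  have hnonzero : (c ^ b * h ^ 2) ^ (2:ℕ) ^ (m-2) ≠ 1 := by
    rw [hkey, h2m2]
    intro heq
    apply hnotK
    have h1 : h ^ (2:ℕ) ^ (m-1) = (c ^ (b * ∑ i ∈ Finset.range (2 ^ (m-2)), (j ^ 2) ^ i))⁻¹ :=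
      eq_inv_of_mul_eq_one_right heq
    rw [h1]
    exact K.inv_mem (hcKn _)
  haveI : Fact (Nat.Prime 2) := ⟨Nat.prime_two⟩
  have hfin : (c ^ b * h ^ 2) ^ (2:ℕ) ^ ((m-2)+1) = 1 := by
    rw [show (m-2)+1 = m-1 by omega]; exact hzero
  have := orderOf_eq_prime_pow hnonzero hfin
  rw [this]; congr 1; omega
end

section
/- Let P = K ⋊ ⟨h⟩ with K dihedral of order 2^{n+1} (n ≥ 2), j ≡ 3 (mod 4), k odd, as above, and suppose b is odd. Then the congruence 2b + k(j+1) + a(j²−1) ≡ 0 (mod 2^n) has no solution a; equivalently, since j + 1 ≡ 0 (mod 4), the square of c^d x h equals c^{d−k−dj} h² with odd c-exponent, so the cyclic group ⟨c^d x h⟩ does not have its index-2 subgroup contained in any subgroup ⟨c^b h², c^a x⟩ with commuting generators. -/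
/-- `P = K ⋊ ⟨h⟩`, `K` dihedral of order `2^(n+1)` (`n ≥ 2`),
`h c h⁻¹ = c^j` with `j ≡ 3 (mod 4)`, `h x h⁻¹ = c^k x` with `k` odd, `h` of order
`2^m`. If `b` is odd then `2b + k(j+1) + a(j²−1) ≡ 0 (mod 2^n)` has no solution `a`;
equivalently, `(c^d x h)² = c^(d−k−dj) h²` with odd `c`-exponent, so the index-2
subgroup of `⟨c^d x h⟩` is not contained in any `⟨c^b' h², c^a x⟩` with commuting
listed generators. -/
theorem stmt_18 (n m j k : ℕ) (hn : 2 ≤ n) (hj : j % 4 = 3) (hk : Odd k)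
    (P : Type*) [Group P] (c x h : P)
    (hc : orderOf c = 2 ^ n) (hx : orderOf x = 2)
    (hxc : x * c * x = c⁻¹)
    (hh : orderOf h = 2 ^ m)
    (hhc : h * c * h⁻¹ = c ^ j)
    (hhx : h * x * h⁻¹ = c ^ k * x)
    (hgen : Subgroup.closure {c, x, h} = (⊤ : Subgroup P))
    (hcard : Nat.card P = 2 ^ (n + 1 + m)) :
    (∀ b : ℕ, Odd b → ¬ ∃ a : ℕ, 2 ^ n ∣ 2 * b + k * (j + 1) + a * (j ^ 2 - 1)) ∧
    (∀ d : ℕ, (c ^ d * x * h) ^ 2 = c ^ ((d : ℤ) - k - d * j) * h ^ 2 ∧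
      Odd ((d : ℤ) - k - d * j)) ∧
    (∀ d a b : ℕ,
      (c ^ b * h ^ 2) * (c ^ a * x) = (c ^ a * x) * (c ^ b * h ^ 2) →
      ¬ Subgroup.zpowers ((c ^ d * x * h) ^ 2) ≤
          Subgroup.closure {c ^ b * h ^ 2, c ^ a * x}) := by
  obtain ⟨t, htk⟩ := hk
  obtain ⟨w, hwj⟩ : ∃ w, j = 4 * w + 3 := ⟨j / 4, by omega⟩
  have hkz : (k : ℤ) = 2 * t + 1 := by exact_mod_cast htk
  have hjz : (j : ℤ) = 4 * w + 3 := by exact_mod_cast hwj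
  have h4n : (4 : ℕ) ∣ 2 ^ n := by
    have := pow_dvd_pow 2 hn
    simpa using this
  -- basic relations
  have x2 : x * x = 1 := by
    have := pow_orderOf_eq_one x
    rwa [hx, sq] at this
  have xinv : x⁻¹ = x := inv_eq_of_mul_eq_one_right x2
  have hcx : ∀ s : ℤ, x * c ^ s = c ^ (-s) * x := by
    intro s
    have h1 : x * c * x⁻¹ = c⁻¹ := by rw [xinv]; exact hxc
    have h2 : x * c ^ s * x⁻¹ = c ^ (-s) := by
      rw [← conj_zpow, h1, inv_zpow, zpow_neg]
    calc x * c ^ s = x * c ^ s * x⁻¹ * x := by group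
      _ = c ^ (-s) * x := by rw [h2]
  have hch : ∀ s : ℤ, h * c ^ s = c ^ ((j : ℤ) * s) * h := by
    intro s
    have h1 : h * c * h⁻¹ = c ^ (j : ℤ) := by rw [zpow_natCast]; exact hhc
    have h2 : h * c ^ s * h⁻¹ = c ^ ((j : ℤ) * s) := by
      rw [← conj_zpow, h1, ← zpow_mul]
    calc h * c ^ s = h * c ^ s * h⁻¹ * h := by group
      _ = c ^ ((j : ℤ) * s) * h := by rw [h2]
  have hxh : h * x = c ^ (k : ℤ) * x * h := by
    have h1 : h * x = c ^ k * x * h := by rw [← hhx]; group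
    rw [h1, zpow_natCast]
  -- key computation (part 2, equation)
  have key : ∀ d : ℕ, (c ^ d * x * h) ^ 2 = c ^ ((d : ℤ) - k - d * j) * h ^ 2 := by
    intro d
    have cd : (c : P) ^ d = c ^ (d : ℤ) := (zpow_natCast c d).symm
    calc (c ^ d * x * h) ^ 2
        = c ^ (d : ℤ) * x * (h * c ^ (d : ℤ)) * x * h := by rw [sq, cd]; group
      _ = c ^ (d : ℤ) * x * (c ^ ((j : ℤ) * d) * h) * x * h := by rw [hch]
      _ = c ^ (d : ℤ) * (x * c ^ ((j : ℤ) * d)) * (h * x) * h := by group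
      _ = c ^ (d : ℤ) * (x * c ^ ((j : ℤ) * d)) * (c ^ (k : ℤ) * x * h) * h := by rw [hxh]
      _ = c ^ (d : ℤ) * (c ^ (-((j : ℤ) * d)) * x) * (c ^ (k : ℤ) * x * h) * h := by rw [hcx]
      _ = c ^ ((d : ℤ) - (j : ℤ) * d) * (x * c ^ (k : ℤ)) * x * (h * h) := by group
      _ = c ^ ((d : ℤ) - (j : ℤ) * d) * (c ^ (-(k : ℤ)) * x) * x * (h * h) := by rw [hcx]
      _ = c ^ ((d : ℤ) - k - d * j) * (x * x) * (h * h) := by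
          rw [show (d : ℤ) - k - d * j = (d : ℤ) - (j : ℤ) * d + -(k : ℤ) by ring]
          group
      _ = c ^ ((d : ℤ) - k - d * j) * h ^ 2 := by rw [x2, sq]; group
  have keyodd : ∀ d : ℕ, Odd ((d : ℤ) - k - d * j) := by
    intro d
    refine ⟨-2 * (d : ℤ) * w - d - t - 1, ?_⟩
    rw [hkz, hjz]; ring
  refine ⟨?_, fun d => ⟨key d, keyodd d⟩, ?_⟩
  · -- part 1
    rintro b ⟨s, hbs⟩ ⟨a, ha⟩
    have h1j : 1 ≤ j ^ 2 := by nlinarith [hwj]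
    have hNd : (4 : ℤ) ∣ ((2 * b + k * (j + 1) + a * (j ^ 2 - 1) : ℕ) : ℤ) := by
      exact_mod_cast (h4n.trans ha)
    have hNe : ((2 * b + k * (j + 1) + a * (j ^ 2 - 1) : ℕ) : ℤ)
        = 4 * ((s : ℤ) + (2 * t + 1) * (w + 1) + a * (4 * w ^ 2 + 6 * w + 2)) + 2 := by
      push_cast [hbs, htk, Nat.cast_sub h1j]
      rw [hjz]; ring
    rw [hNe] at hNd
    omega
  · -- part 3
    intro d a b hcomm hle
    have hg : (c ^ d * x * h) ^ 2 ∈ Subgroup.closure {c ^ b * h ^ 2, c ^ a * x} :=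
      hle (Subgroup.mem_zpowers _)
    have hcent : Subgroup.closure {c ^ b * h ^ 2, c ^ a * x}
        ≤ Subgroup.centralizer {c ^ a * x} := by
      rw [Subgroup.closure_le]
      rintro y (rfl | rfl)
      · exact Subgroup.mem_centralizer_iff.mpr (by rintro z rfl; exact hcomm.symm)
      · exact Subgroup.mem_centralizer_iff.mpr (by rintro z rfl; rfl)
    have hcm : (c ^ a * x) * (c ^ d * x * h) ^ 2 = (c ^ d * x * h) ^ 2 * (c ^ a * x) :=
      Subgroup.mem_centralizer_iff.mp (hcent hg) _ rfl
    set e : ℤ := (d : ℤ) - k - d * j with he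
    rw [key d] at hcm
    have ca : (c : P) ^ a = c ^ (a : ℤ) := (zpow_natCast c a).symm
    -- rewrite both sides
    have hL : c ^ (a : ℤ) * x * (c ^ e * h ^ 2) = c ^ ((a : ℤ) - e) * (x * h ^ 2) := by
      calc c ^ (a : ℤ) * x * (c ^ e * h ^ 2)
          = c ^ (a : ℤ) * (x * c ^ e) * h ^ 2 := by group
        _ = c ^ (a : ℤ) * (c ^ (-e) * x) * h ^ 2 := by rw [hcx]
        _ = c ^ ((a : ℤ) - e) * (x * h ^ 2) := by group
    have hR : c ^ e * h ^ 2 * (c ^ (a : ℤ) * x)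
        = c ^ (e + (j : ℤ) * ((j : ℤ) * a) + ((j : ℤ) * k + k)) * (x * h ^ 2) := by
      calc c ^ e * h ^ 2 * (c ^ (a : ℤ) * x)
          = c ^ e * (h * (h * c ^ (a : ℤ))) * x := by rw [sq]; group
        _ = c ^ e * (h * (c ^ ((j : ℤ) * a) * h)) * x := by rw [hch]
        _ = c ^ e * ((h * c ^ ((j : ℤ) * a)) * (h * x)) := by group
        _ = c ^ e * ((c ^ ((j : ℤ) * ((j : ℤ) * a)) * h) * (c ^ (k : ℤ) * x * h)) := by
            rw [hch, hxh]
        _ = c ^ (e + (j : ℤ) * ((j : ℤ) * a)) * (h * c ^ (k : ℤ)) * x * h := by group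
        _ = c ^ (e + (j : ℤ) * ((j : ℤ) * a)) * (c ^ ((j : ℤ) * k) * h) * x * h := by rw [hch]
        _ = c ^ (e + (j : ℤ) * ((j : ℤ) * a) + (j : ℤ) * k) * (h * x) * h := by group
        _ = c ^ (e + (j : ℤ) * ((j : ℤ) * a) + (j : ℤ) * k) * (c ^ (k : ℤ) * x * h) * h := by
            rw [hxh]
        _ = c ^ (e + (j : ℤ) * ((j : ℤ) * a) + ((j : ℤ) * k + k)) * (x * (h * h)) := by group
        _ = _ := by rw [sq]
    rw [ca, hL, hR] at hcm
    have hcc : c ^ ((a : ℤ) - e) = c ^ (e + (j : ℤ) * ((j : ℤ) * a) + ((j : ℤ) * k + k)) :=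
      mul_right_cancel hcm
    have hone : c ^ ((e + (j : ℤ) * ((j : ℤ) * a) + ((j : ℤ) * k + k)) - ((a : ℤ) - e)) = 1 := by
      rw [zpow_sub, ← hcc, mul_inv_cancel]
    have hdvd : ((2 : ℤ) ^ n) ∣ ((e + (j : ℤ) * ((j : ℤ) * a) + ((j : ℤ) * k + k)) - ((a : ℤ) - e)) := by
      have := orderOf_dvd_iff_zpow_eq_one.mpr hone
      rw [hc] at this
      exact_mod_cast this
    have h4 : (4 : ℤ) ∣ ((e + (j : ℤ) * ((j : ℤ) * a) + ((j : ℤ) * k + k)) - ((a : ℤ) - e)) := by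
      refine dvd_trans ?_ hdvd
      have : (4 : ℤ) = ((4 : ℕ) : ℤ) := by norm_num
      rw [this]
      exact_mod_cast h4n
    obtain ⟨u, hu⟩ := keyodd d
    rw [← he] at hu
    have hXe : (e + (j : ℤ) * ((j : ℤ) * a) + ((j : ℤ) * k + k)) - ((a : ℤ) - e)
        = 4 * (u + a * (4 * w ^ 2 + 6 * w + 2) + (2 * t + 1) * (w + 1)) + 2 := by
      rw [hu, hkz, hjz]; ring
    rw [hXe] at h4
    omega
end
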